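/- arXiv:1608.06021 — 2 statements merged into one kernel-verified Lean document; each statement's English description precedes it below -/
import Mathlib

section
/- Let Δ be an inseparable simple graph of order at least 3. Suppose Ω is a biased expansion of Δ and Ω = ⟨Φ⟩ for some gain graph Φ with gain group G (with the projection of the expansion equal to the projection of edges of Φ to edges of Δ). Then there is a subgroup H ≤ G such that Ω = ⟨H·Δ⟩, the biased graph of the group expansion of Δ by H, and Φ is a switching of H·Δ. -/
open scoped Classical

/-! ## Graphs with parallel links and half edges -/

/-- A multigraph: each edge has a finite set of endpoints
(one endpoint for a half edge, two endpoints for a link). -/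
structure MGraph (N : Type*) (E : Type*) where
  ends : E → Finset N

namespace MGraph

variable {N E : Type*} (G : MGraph N E)

/-- A link has two distinct endpoints. -/
def IsLink (e : E) : Prop := (G.ends e).card = 2

/-- A half edge has exactly one endpoint. -/
def IsHalfEdge (e : E) : Prop := (G.ends e).card = 1

/-- The set of nodes of a set of edges. -/
def nodeSet (S : Set E) : Set N := {v | ∃ e ∈ S, v ∈ G.ends e}

/-- The nodes of a finite set of edges. -/
noncomputable def nodesOf (S : Finset E) : Finset N := S.biUnion G.ends

/-- The degree of a node in a finite edge set. -/
noncomputable def degreeIn (S : Finset E) (v : N) : ℕ :=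
  (S.filter (fun e => v ∈ G.ends e)).card

/-- Two nodes joined by an edge of `S`. -/
def adjIn (S : Set E) (u v : N) : Prop := ∃ e ∈ S, u ∈ G.ends e ∧ v ∈ G.ends e

/-- Connectivity of nodes through edges of `S`. -/
def nodeConn (S : Set E) : N → N → Prop := Relation.ReflTransGen (G.adjIn S)

/-- The components of the spanning subgraph `(N, S)`, as sets of nodes. -/
def components (S : Set E) : Set (Set N) := {W | ∃ v : N, W = {u | G.nodeConn S u v}}

/-- The number of components of the spanning subgraph `(N, S)`. -/
noncomputable def numComponents (S : Set E) : ℕ := Nat.card ↥(G.components S)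

/-- The components of the non-spanning subgraph `(N(S), S)`. -/
def componentsOn (S : Set E) : Set (Set N) :=
  {W | ∃ v ∈ G.nodeSet S, W = {u | G.nodeConn S u v}}

/-- The edges of `S` whose endpoints all lie in a node set `W`. -/
def edgesIn (S : Set E) (W : Set N) : Set E := {e | e ∈ S ∧ ∀ v ∈ G.ends e, v ∈ W}

/-- An edge set is connected if any two of its edges are joined through
consecutively intersecting edges of the set. -/
def ConnEdges (S : Set E) : Prop :=
  ∀ e ∈ S, ∀ f ∈ S, Relation.ReflTransGen
    (fun a b => a ∈ S ∧ b ∈ S ∧ ∃ v : N, v ∈ G.ends a ∧ v ∈ G.ends b) e f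

/-- A circle: the edge set of a connected subgraph in which every node has degree 2. -/
def IsCircle (C : Finset E) : Prop :=
  C.Nonempty ∧ (∀ e ∈ C, G.IsLink e) ∧ G.ConnEdges ↑C ∧
    ∀ v ∈ G.nodesOf C, G.degreeIn C v = 2

/-- A (simple, open) path joining two distinct nodes `u` and `v`. -/
def IsPath (Q : Finset E) (u v : N) : Prop :=
  Q.Nonempty ∧ u ≠ v ∧ (∀ e ∈ Q, G.IsLink e) ∧ G.ConnEdges ↑Q ∧
    u ∈ G.nodesOf Q ∧ v ∈ G.nodesOf Q ∧
    G.degreeIn Q u = 1 ∧ G.degreeIn Q v = 1 ∧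
    ∀ w ∈ G.nodesOf Q, w ≠ u → w ≠ v → G.degreeIn Q w = 2

/-- A simple graph: all edges are links and no two edges have the same endpoints. -/
def IsSimple : Prop := (∀ e : E, G.IsLink e) ∧ Function.Injective G.ends

/-- The graph is connected. -/
def IsConnected : Prop := ∀ u v : N, G.nodeConn Set.univ u v

/-- Inseparable graph: connected, and for every partition of the edge set into two
nonempty parts the two parts share at least two nodes. -/
def IsInseparable : Prop :=
  G.IsConnected ∧ ∀ A B : Set E, A.Nonempty → B.Nonempty → Disjoint A B →
    A ∪ B = Set.univ → ∃ u v : N, u ≠ v ∧ u ∈ G.nodeSet A ∧ u ∈ G.nodeSet B ∧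
      v ∈ G.nodeSet A ∧ v ∈ G.nodeSet B

/-- A linear class of circles: every member is a circle and no theta subgraph (the
union of three pairwise internally disjoint paths with the same two endpoints)
contains exactly two members of the class. -/
def IsLinearClass (B : Set (Finset E)) : Prop :=
  (∀ C ∈ B, G.IsCircle C) ∧
  ∀ u v : N, ∀ P₁ P₂ P₃ : Finset E,
    G.IsPath P₁ u v → G.IsPath P₂ u v → G.IsPath P₃ u v →
    Disjoint P₁ P₂ → Disjoint P₁ P₃ → Disjoint P₂ P₃ →
    (↑(G.nodesOf P₁) ∩ ↑(G.nodesOf P₂) : Set N) = {u, v} →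
    (↑(G.nodesOf P₁) ∩ ↑(G.nodesOf P₃) : Set N) = {u, v} →
    (↑(G.nodesOf P₂) ∩ ↑(G.nodesOf P₃) : Set N) = {u, v} →
    P₁ ∪ P₂ ∈ B → P₁ ∪ P₃ ∈ B → P₂ ∪ P₃ ∈ B

/-- A balanced edge set with respect to a class `B` of balanced circles:
no half edges, and every circle inside it belongs to `B`. -/
def IsBalancedSet (B : Set (Finset E)) (S : Set E) : Prop :=
  (∀ e ∈ S, G.IsLink e) ∧ ∀ C : Finset E, ↑C ⊆ S → G.IsCircle C → C ∈ B

/-- The number of balanced components of the spanning subgraph `(N, S)`. -/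
noncomputable def numBalComponents (B : Set (Finset E)) (S : Set E) : ℕ :=
  Nat.card ↥{W : Set N | W ∈ G.components S ∧ G.IsBalancedSet B (G.edgesIn S W)}

/-- Frame matroid rank function: `rk S = #N - b(S)`. -/
noncomputable def frameRk [Fintype N] (B : Set (Finset E)) (S : Set E) : ℕ :=
  Fintype.card N - G.numBalComponents B S

/-- Graphic (cycle) matroid rank function: `rk S = #N - c(S)`. -/
noncomputable def graphicRk [Fintype N] (S : Set E) : ℕ :=
  Fintype.card N - G.numComponents S

/-- Graphic matroid rank of a finite edge set, computed inside its own node set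
(valid also for infinite graphs): `rk S = #N(S) - c(N(S), S)`. -/
noncomputable def graphicRkOn (S : Finset E) : ℕ :=
  (G.nodesOf S).card - Nat.card ↥(G.componentsOn ↑S)

/-- Extended lift matroid rank function on `E ⊕ Unit`, where `Sum.inr ()` is the
extra point `e₀`: `rk S = #N - c(S ∩ E)` if `S ⊆ E` is balanced, and
`#N - c(S ∩ E) + 1` if `S` is unbalanced or contains `e₀`. -/
noncomputable def liftRk [Fintype N] (B : Set (Finset E)) (S : Set (E ⊕ Unit)) : ℕ :=
  if G.IsBalancedSet B {e | Sum.inl e ∈ S} ∧ Sum.inr () ∉ S then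
    Fintype.card N - G.numComponents {e | Sum.inl e ∈ S}
  else Fintype.card N - G.numComponents {e | Sum.inl e ∈ S} + 1

/-- Closed sets of the frame matroid (via the rank function; the matroid is finitary). -/
def FrameClosed [Fintype N] (B : Set (Finset E)) (S : Set E) : Prop :=
  ∀ e : E, (∃ S₀ : Finset E, ↑S₀ ⊆ S ∧
    G.frameRk B ↑(insert e S₀) = G.frameRk B ↑S₀) → e ∈ S

/-- Closed sets of the extended lift matroid. -/
def LiftClosed [Fintype N] (B : Set (Finset E)) (S : Set (E ⊕ Unit)) : Prop :=
  ∀ x : E ⊕ Unit, (∃ S₀ : Finset (E ⊕ Unit), ↑S₀ ⊆ S ∧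
    G.liftRk B ↑(insert x S₀) = G.liftRk B ↑S₀) → x ∈ S

/-- The balance-closure of an edge set. -/
def bcl (B : Set (Finset E)) (S : Set E) : Set E :=
  S ∪ {e | ∃ C ∈ B, e ∈ C ∧ ↑C ⊆ S ∪ {e}}

/-- The subgraph of all links, as a graph on the same nodes. -/
def linkGraph : MGraph N {e : E // G.IsLink e} := ⟨fun e => G.ends e.val⟩

/-- Restriction of a class of circles to the subgraph of links. -/
def linkBal (B : Set (Finset E)) : Set (Finset {e : E // G.IsLink e}) :=
  {C | C.image Subtype.val ∈ B}

/-- The subgraph on a subset of the edges (spanning all nodes). -/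
def sub (D : Set E) : MGraph N ↥D := ⟨fun f => G.ends f.val⟩

end MGraph

/-- A graph together with a distinguished class of "balanced" circles.
(It is a biased graph when the class is a linear class.) -/
structure BiasedGraph (N E : Type*) extends MGraph N E where
  Bal : Set (Finset E)

/-- The complete graph on a node set `N`. -/
def completeMGraph (N : Type*) : MGraph N {q : Finset N // q.card = 2} := ⟨Subtype.val⟩

/-- A gain graph with gain group `Γ`: each edge is given by a source, a target
(equal for a half edge) and a gain in the direction from source to target. -/
structure GainGraph (N E : Type*) (Γ : Type*) [Group Γ] extends MGraph N E where
  src : E → N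
  tgt : E → N
  gain : E → Γ
  ends_eq : ∀ e : E, ends e = {src e, tgt e}

namespace GainGraph

variable {N E Γ : Type*} [Group Γ] (Φ : GainGraph N E Γ)

/-- The gain of an edge in the direction from `u` to `v`. -/
noncomputable def ogain (e : E) (u v : N) : Γ :=
  if Φ.src e = u ∧ Φ.tgt e = v then Φ.gain e else (Φ.gain e)⁻¹

/-- A balanced circle of a gain graph: a circle whose gain function is given by a
potential on the nodes (equivalently, the product of its gains along a cyclic
orientation is the identity). -/
def BalancedCircle (C : Finset E) : Prop :=
  Φ.toMGraph.IsCircle C ∧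
    ∃ θ : N → Γ, ∀ e ∈ C, Φ.gain e = (θ (Φ.src e))⁻¹ * θ (Φ.tgt e)

/-- The biased graph `⟨Φ⟩` of a gain graph. -/
def biasedGraph : BiasedGraph N E := { Φ.toMGraph with Bal := {C | Φ.BalancedCircle C} }

end GainGraph

/-- A biased expansion of a graph `Δ` along a projection `p`: `p` is surjective,
preserves endpoints, and every circle of `Δ` with a chosen lift of all but one of
its edges has a unique completion to a balanced circle. -/
def IsBiasedExpansion {N E E' : Type*} (G : MGraph N E) (B : Set (Finset E))
    (Δ : MGraph N E') (p : E → E') : Prop :=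
  Function.Surjective p ∧ (∀ e : E, G.ends e = Δ.ends (p e)) ∧
  ∀ C : Finset E', Δ.IsCircle C → ∀ e₀ ∈ C, ∀ s : E' → E,
    (∀ f ∈ C.erase e₀, p (s f) = f) →
    ∃! t : E, p t = e₀ ∧ (C.erase e₀).image s ∪ {t} ∈ B

/-! ## Axiomatic (synthetic) projective geometry -/

/-- An axiomatic projective geometry: a point set with a line through any two
points, unique when the points are distinct, every line having at least three
points, and satisfying the Veblen–Young axiom. -/
structure ProjGeom (P : Type*) where
  line : P → P → Set P
  line_self : ∀ p : P, line p p = {p}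
  line_symm : ∀ p q : P, line p q = line q p
  left_mem_line : ∀ p q : P, p ∈ line p q
  right_mem_line : ∀ p q : P, q ∈ line p q
  line_unique : ∀ p q x y : P, p ≠ q → x ∈ line p q → y ∈ line p q → x ≠ y →
    line x y = line p q
  exists_third : ∀ p q : P, p ≠ q → ∃ r ∈ line p q, r ≠ p ∧ r ≠ q
  veblen : ∀ p q r s x : P, p ≠ q → r ≠ s → p ≠ r → q ≠ s →
    x ∈ line p q → x ∈ line r s → ∃ y, y ∈ line p r ∧ y ∈ line q s

namespace ProjGeom

variable {P : Type*} (G : ProjGeom P)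

/-- A flat (subspace): a line-closed set of points. -/
def IsFlat (t : Set P) : Prop := ∀ p ∈ t, ∀ q ∈ t, G.line p q ⊆ t

/-- The span of a point set: the smallest flat containing it. -/
def span (A : Set P) : Set P := ⋂₀ {t : Set P | G.IsFlat t ∧ A ⊆ t}

/-- An independent point set: no point is in the span of the others. -/
def Indep (A : Set P) : Prop := ∀ a ∈ A, a ∉ G.span (A \ {a})

/-- The (matroid) rank of a point set: the largest cardinality of a finite
independent subset. -/
noncomputable def rank (A : Set P) : ℕ :=
  sSup {n : ℕ | ∃ B : Finset P, ↑B ⊆ A ∧ G.Indep ↑B ∧ B.card = n}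

/-- A hyperplane: a maximal proper flat. -/
def IsHyperplane (h : Set P) : Prop :=
  G.IsFlat h ∧ h ≠ Set.univ ∧ ∀ t : Set P, G.IsFlat t → h ⊆ t → t = h ∨ t = Set.univ

/-- The codimension of a flat: the least number of hyperplanes intersecting in it. -/
noncomputable def codim (t : Set P) : ℕ :=
  sInf {n : ℕ | ∃ H : Finset (Set P), H.card = n ∧ (∀ h ∈ H, G.IsHyperplane h) ∧
    ⋂₀ ↑H = t}

variable {N : Type*}

/-- A cross-flat with respect to an independent family `ν`: a flat containing
none of the points `ν v`. -/
def crossFlat (ν : N → P) (t : Set P) : Prop := G.IsFlat t ∧ ∀ v : N, ν v ∉ t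

/-- The union of all edge lines of the independent family `ν`. -/
def edgeLineUnion (ν : N → P) : Set P :=
  ⋃ (v : N) (w : N) (_ : v ≠ w), G.line (ν v) (ν w)

/-! ### The Menelaean (point) construction for the frame matroid -/

/-- The underlying graph of the Menelaean construction `Ω(N̂, Ehat)`: a point of `Ehat`
in `N̂` is a half edge, any other point is a link joining the ends of its edge line. -/
noncomputable def menGraph (ν : N → P) (Ehat : Set P)
    (hE : ∀ x ∈ Ehat, x ∉ Set.range ν →
      ∃ pr : N × N, pr.1 ≠ pr.2 ∧ x ∈ G.line (ν pr.1) (ν pr.2)) :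
    MGraph N ↥Ehat where
  ends e :=
    if h : (e : P) ∈ Set.range ν then {(show ∃ v : N, ν v = ↑e from h).choose}
    else {(hE e e.2 h).choose.1, (hE e e.2 h).choose.2}

/-- The balanced circles of the Menelaean construction: circles whose point set
lies in a cross-flat. -/
noncomputable def menBal (ν : N → P) (Ehat : Set P)
    (hE : ∀ x ∈ Ehat, x ∉ Set.range ν →
      ∃ pr : N × N, pr.1 ≠ pr.2 ∧ x ∈ G.line (ν pr.1) (ν pr.2)) :
    Set (Finset ↥Ehat) :=
  {C | (G.menGraph ν Ehat hE).IsCircle C ∧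
    ∃ t : Set P, G.crossFlat ν t ∧ ∀ e ∈ C, (e : P) ∈ t}

/-! ### The Cevian (hyperplane) construction for the frame matroid -/

/-- A Cevian arrangement over the point basis `ν`, described by its associated
graph `Γ` and its apex function: a link `e` with endpoints `v, w` has its apex on
the edge line `v̂ŵ`, off the basis; a half edge at `v` has apex `ν v`. -/
def IsCevian {E : Type*} (ν : N → P) (Γ : MGraph N E) (apex : E → P) : Prop :=
  ∀ e : E,
    (∃ v w : N, v ≠ w ∧ Γ.ends e = ({v, w} : Finset N) ∧
      apex e ∈ G.line (ν v) (ν w) ∧ apex e ∉ Set.range ν) ∨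
    (∃ v : N, Γ.ends e = ({v} : Finset N) ∧ apex e = ν v)

/-- The apical hyperplane of an edge of a Cevian arrangement. -/
def cevHyp {E : Type*} (ν : N → P) (Γ : MGraph N E) (apex : E → P) (e : E) : Set P :=
  if Γ.IsLink e then G.span ((ν '' {u : N | u ∉ Γ.ends e}) ∪ {apex e})
  else G.span (ν '' {u : N | u ∉ Γ.ends e})

/-- The rank function of a Cevian arrangement:
the codimension of the intersection of the corresponding apical hyperplanes. -/
noncomputable def cevRk {E : Type*} (ν : N → P) (Γ : MGraph N E) (apex : E → P)
    (S : Finset E) : ℕ :=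
  G.codim (⋂ e ∈ S, G.cevHyp ν Γ apex e)

/-- The balanced circles of a Cevian arrangement:
circles of deficient hyperplane-intersection rank. -/
noncomputable def cevBal {E : Type*} (ν : N → P) (Γ : MGraph N E) (apex : E → P) :
    Set (Finset E) :=
  {C | Γ.IsCircle C ∧ G.cevRk ν Γ apex C < C.card}

/-! ### The orthographic (point) construction for the lift matroid -/

/-- The projection of the orthographic construction: each point of `Ehat` lies on the
edge line `z'(f)e₀` of a unique edge `f` of `Δ`. -/
noncomputable def orthoProj {E' : Type*} (z' : E' → P) (e₀ : P) (Ehat : Set P)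
    (hE : ∀ x ∈ Ehat, ∃ f : E', x ∈ G.line (z' f) e₀) : ↥Ehat → E' :=
  fun e => (hE e e.2).choose

/-- The underlying graph of the orthographic construction `Ω₀(Ehat)`. -/
noncomputable def orthoGraph {E' : Type*} (Δ : MGraph N E') (z' : E' → P) (e₀ : P)
    (Ehat : Set P) (hE : ∀ x ∈ Ehat, ∃ f : E', x ∈ G.line (z' f) e₀) : MGraph N ↥Ehat :=
  ⟨fun e => Δ.ends (G.orthoProj z' e₀ Ehat hE e)⟩

/-- The balanced circles of the orthographic construction:
circles spanning a cross-flat (a flat not containing `e₀`). -/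
noncomputable def orthoBal {E' : Type*} (Δ : MGraph N E') (z' : E' → P) (e₀ : P)
    (Ehat : Set P) (hE : ∀ x ∈ Ehat, ∃ f : E', x ∈ G.line (z' f) e₀) : Set (Finset ↥Ehat) :=
  {C | (G.orthoGraph Δ z' e₀ Ehat hE).IsCircle C ∧
    e₀ ∉ G.span (Subtype.val '' (↑C : Set ↥Ehat))}

end ProjGeom

/-! ### Synthetic affinographic arrangements -/

/-- A synthetic affinographic arrangement of hyperplanes in the affine geometry
obtained from the projective geometry `G` by deleting the ideal hyperplane `hinf`:
a family of hyperplanes `hP e` (given by their projective completions, with affine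
parts `hP e \ hinf`), with parallel classes indexed by the edges of a graph `Δ` with
links only via the surjection `π`; hyperplanes in the class of `f` have common
ideal part `ideal f`, and the matroid of the ideal parts (rank = codimension inside
`hinf`) is the graphic matroid of `Δ`. -/
def IsAffinographic {P N E E' : Type*} [Fintype N] (G : ProjGeom P) (hinf : Set P)
    (hP : E → Set P) (Δ : MGraph N E') (π : E → E') (ideal : E' → Set P) : Prop :=
  G.IsHyperplane hinf ∧ (∀ f : E', Δ.IsLink f) ∧ Function.Surjective π ∧
  Function.Injective hP ∧ Function.Injective ideal ∧
  (∀ e : E, G.IsHyperplane (hP e) ∧ hP e ≠ hinf ∧ hP e ∩ hinf = ideal (π e)) ∧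
  ∀ S : Finset E', Δ.graphicRk (↑S : Set E') = G.codim (hinf ∩ ⋂ f ∈ S, ideal f) - 1

/-- The underlying graph of the biased graph `Ω(A)` of an affinographic
arrangement: each edge of `Δ` is replaced by the edges of its parallel class. -/
def affinoGraph {N E E' : Type*} (Δ : MGraph N E') (π : E → E') : MGraph N E :=
  ⟨fun e => Δ.ends (π e)⟩

/-- The affine intersection `t_A(S)` of the hyperplanes of `S`. -/
def affInter {P E : Type*} (hinf : Set P) (hP : E → Set P) (S : Set E) : Set P :=
  ⋂ e ∈ S, (hP e \ hinf)

/-- The balanced circles of `Ω(A)`: digons over a single edge of `Δ` are unbalanced;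
any other circle is balanced iff its affine intersection is nonempty. -/
def affinoBal {P N E E' : Type*} (_G : ProjGeom P) (hinf : Set P) (hP : E → Set P)
    (Δ : MGraph N E') (π : E → E') : Set (Finset E) :=
  {C | (affinoGraph Δ π).IsCircle C ∧ ¬(∃ f : E', ∀ e ∈ C, π e = f) ∧
    (affInter hinf hP ↑C).Nonempty}

/-! ### Coordinatized projective spaces -/

/-- The rank of a finite set of points of a coordinatized projective space:
the dimension of the linear span of representative vectors. -/
noncomputable def projRank (F : Type*) {V : Type*} [DivisionRing F] [AddCommGroup V]
    [Module F V] (A : Finset (Projectivization F V)) : ℕ :=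
  Module.finrank F ↥(Submodule.span F (Projectivization.rep '' (↑A : Set (Projectivization F V))))

/-- The edge set of the full biased graph `Ω^•`: the edges of `Ω` together with a
new half edge at every node not already supporting one. -/
def FullE {N E : Type*} (Ω : BiasedGraph N E) : Type _ :=
  E ⊕ {v : N // ∀ e : E, Ω.ends e ≠ ({v} : Finset N)}

/-- The underlying graph of the full biased graph `Ω^•`. -/
def fullGraph {N E : Type*} (Ω : BiasedGraph N E) : MGraph N (FullE Ω) :=
  ⟨Sum.elim Ω.ends (fun v => {v.val})⟩

/-- The balanced circles of the full biased graph `Ω^•` (circles avoid half edges). -/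
def fullBal {N E : Type*} (Ω : BiasedGraph N E) : Set (Finset (FullE Ω)) :=
  {C | ∃ C₀ ∈ Ω.Bal, C = C₀.image Sum.inl}

/-! ## Auxiliary: explicit walks in a multigraph -/

namespace MGraph

variable {N X : Type*}

/-- An explicit walk: edge list together with its node list. -/
def GW (G : MGraph N X) : List X → List N → Prop
  | [], xs => ∃ u, xs = [u]
  | e :: es, xs =>
      ∃ u w xs', xs = u :: w :: xs' ∧ u ≠ w ∧ G.ends e = {u, w} ∧ GW G es (w :: xs')

variable (G : MGraph N X)

theorem gw_nil {xs : List N} : G.GW [] xs ↔ ∃ u, xs = [u] := Iff.rfl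

theorem gw_cons {e : X} {es : List X} {xs : List N} :
    G.GW (e :: es) xs ↔
      ∃ u w xs', xs = u :: w :: xs' ∧ u ≠ w ∧ G.ends e = {u, w} ∧ G.GW es (w :: xs') :=
  Iff.rfl

variable {G}

theorem gw_length {es : List X} {xs : List N} (h : G.GW es xs) :
    xs.length = es.length + 1 := by
  induction es generalizing xs with
  | nil => obtain ⟨u, rfl⟩ := h; rfl
  | cons e es ih =>
      obtain ⟨u, w, xs', rfl, -, -, h⟩ := h
      simpa using ih h

theorem gw_ne_nil {es : List X} {xs : List N} (h : G.GW es xs) : xs ≠ [] := by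
  intro hx; have := gw_length h; rw [hx] at this; simp at this

theorem gw_append {es₁ es₂ : List X} {xs₁ xs₂ : List N} {m : N}
    (h₁ : G.GW es₁ (xs₁ ++ [m])) (h₂ : G.GW es₂ (m :: xs₂)) :
    G.GW (es₁ ++ es₂) (xs₁ ++ m :: xs₂) := by
  induction es₁ generalizing xs₁ with
  | nil =>
      obtain ⟨u, hu⟩ := h₁
      have hx : xs₁ = [] := by
        have := congrArg List.length hu
        simp only [List.length_append, List.length_singleton, List.length_cons,
          List.length_nil] at this
        exact List.length_eq_zero_iff.mp (by omega)
      subst hx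
      simpa using h₂
  | cons e es ih =>
      obtain ⟨u, w, xs', hx, hne, hends, h⟩ := h₁
      cases xs₁ with
      | nil =>
          exfalso
          simp at hx
      | cons a t =>
          simp only [List.cons_append, List.cons.injEq] at hx
          obtain ⟨rfl, hx⟩ := hx
          cases t with
          | nil =>
              simp only [List.nil_append, List.cons.injEq] at hx
              obtain ⟨rfl, rfl⟩ := hx
              refine ⟨a, m, _, rfl, hne, hends, ?_⟩
              exact ih (xs₁ := []) (by simpa using h)
          | cons b t' =>
              simp only [List.cons_append, List.cons.injEq] at hx
              obtain ⟨rfl, hx⟩ := hx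
              rw [← hx] at h
              refine ⟨a, b, _, rfl, hne, hends, ?_⟩
              exact ih (xs₁ := b :: t') h

theorem gw_reverse {es : List X} {xs : List N} (h : G.GW es xs) :
    G.GW es.reverse xs.reverse := by
  induction es generalizing xs with
  | nil => obtain ⟨u, rfl⟩ := h; exact ⟨u, rfl⟩
  | cons e es ih =>
      obtain ⟨u, w, xs', rfl, hne, hends, h⟩ := h
      have h2 : G.GW [e] [w, u] := ⟨w, u, [], rfl, hne.symm, by rw [hends]; exact Finset.pair_comm u w, ⟨u, rfl⟩⟩
      have h1 := ih h
      have : (w :: xs').reverse = xs'.reverse ++ [w] := by simp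
      rw [this] at h1
      have := gw_append h1 h2
      simpa using this

theorem gw_split {es : List X} {as bs : List N} {c : N}
    (h : G.GW es (as ++ c :: bs)) :
    ∃ es₁ es₂, es = es₁ ++ es₂ ∧ G.GW es₁ (as ++ [c]) ∧ G.GW es₂ (c :: bs) := by
  induction as generalizing es with
  | nil =>
      exact ⟨[], es, rfl, ⟨c, rfl⟩, by simpa using h⟩
  | cons a as ih =>
      cases es with
      | nil =>
          obtain ⟨u, hu⟩ := h
          exfalso
          have := congrArg List.length hu
          simp at this
      | cons e es =>
          obtain ⟨u, w, xs', hx, hne, hends, h⟩ := h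
          simp only [List.cons_append, List.cons.injEq] at hx
          obtain ⟨rfl, hx⟩ := hx
          rw [← hx] at h
          obtain ⟨es₁, es₂, rfl, hw₁, hw₂⟩ := ih h
          refine ⟨e :: es₁, es₂, rfl, ?_, hw₂⟩
          cases as with
          | nil =>
              simp only [List.nil_append] at hx ⊢
              obtain ⟨rfl, -⟩ : w = c ∧ xs' = bs := by
                simpa using hx.symm
              exact ⟨a, w, [], rfl, hne, hends, hw₁⟩
          | cons b as' =>
              obtain ⟨rfl, -⟩ : w = b ∧ xs' = as' ++ c :: bs := by
                simpa using hx.symm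
              exact ⟨a, w, _, rfl, hne, hends, hw₁⟩

theorem gw_ends_subset {es : List X} {xs : List N} (h : G.GW es xs) {e : X}
    (he : e ∈ es) : ∀ y ∈ G.ends e, y ∈ xs := by
  induction es generalizing xs with
  | nil => simp at he
  | cons e' es ih =>
      obtain ⟨u, w, xs', rfl, hne, hends, h⟩ := h
      rcases List.mem_cons.mp he with rfl | he'
      · intro y hy
        rw [hends] at hy
        rcases Finset.mem_insert.mp hy with rfl | hy
        · exact List.mem_cons_self
        · simp only [Finset.mem_singleton] at hy
          subst hy
          exact List.mem_cons_of_mem _ (List.mem_cons_self)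
      · intro y hy
        exact List.mem_cons_of_mem _ (ih h he' y hy)

theorem gw_link {es : List X} {xs : List N} (h : G.GW es xs) {e : X}
    (he : e ∈ es) : ∃ a b, a ≠ b ∧ G.ends e = {a, b} := by
  induction es generalizing xs with
  | nil => simp at he
  | cons e' es ih =>
      obtain ⟨u, w, xs', rfl, hne, hends, h⟩ := h
      rcases List.mem_cons.mp he with rfl | he'
      · exact ⟨u, w, hne, hends⟩
      · exact ih h he'

theorem gw_edges_nodup {es : List X} {xs : List N} (h : G.GW es xs)
    (hx : xs.Nodup) : es.Nodup := by
  induction es generalizing xs with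
  | nil => exact List.nodup_nil
  | cons e es ih =>
      obtain ⟨u, w, xs', rfl, hne, hends, h⟩ := h
      rw [List.nodup_cons] at hx ⊢
      refine ⟨?_, ih h hx.2⟩
      intro hmem
      have := gw_ends_subset h hmem u (by rw [hends]; exact Finset.mem_insert_self _ _)
      exact hx.1 this

theorem list_dup_split {α : Type*} {l : List α} (h : ¬ l.Nodup) :
    ∃ (a : α) (l₁ l₂ l₃ : List α), l = l₁ ++ a :: l₂ ++ a :: l₃ := by
  induction l with
  | nil => exact absurd List.nodup_nil h
  | cons x t ih =>
      by_cases hx : x ∈ t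
      · obtain ⟨s₁, s₂, rfl⟩ := List.append_of_mem hx
        exact ⟨x, [], s₁, s₂, rfl⟩
      · have : ¬ t.Nodup := fun ht => h (List.nodup_cons.mpr ⟨hx, ht⟩)
        obtain ⟨a, l₁, l₂, l₃, rfl⟩ := ih this
        exact ⟨a, x :: l₁, l₂, l₃, rfl⟩

theorem list_head?_append_cons {α : Type*} (l : List α) (a : α) (t t' : List α) :
    (l ++ a :: t).head? = (l ++ a :: t').head? := by
  cases l <;> simp

theorem list_getLast?_append_cons {α : Type*} (l : List α) (a : α) (t : List α) :
    (l ++ a :: t).getLast? = (a :: t).getLast? := by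
  induction l with
  | nil => rfl
  | cons x l ih =>
      rw [List.cons_append, ← ih]
      cases l <;> simp [List.getLast?_cons_cons]

theorem gw_to_path {es : List X} {xs : List N} (h : G.GW es xs) :
    ∃ es' xs', G.GW es' xs' ∧ xs'.Nodup ∧ xs'.head? = xs.head? ∧
      xs'.getLast? = xs.getLast? ∧ ∀ y ∈ xs', y ∈ xs := by
  obtain ⟨n, hn⟩ : ∃ n, es.length = n := ⟨_, rfl⟩
  induction n using Nat.strong_induction_on generalizing es xs with
  | _ n IH =>
  subst hn
  by_cases hx : xs.Nodup
  · exact ⟨es, xs, h, hx, rfl, rfl, fun y hy => hy⟩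
  · obtain ⟨a, l₁, l₂, l₃, hsplit⟩ := list_dup_split hx
    subst hsplit
    have h' : G.GW es (l₁ ++ a :: (l₂ ++ a :: l₃)) := by simpa using h
    obtain ⟨es₁, es₂, rfl, hw₁, hw₂⟩ := gw_split h'
    have hw₂' : G.GW es₂ ((a :: l₂) ++ a :: l₃) := by simpa using hw₂
    obtain ⟨es₃, es₄, rfl, hw₃, hw₄⟩ := gw_split hw₂'
    have hnew := gw_append hw₁ hw₄
    have hlt : (es₁ ++ es₄).length < (es₁ ++ (es₃ ++ es₄)).length := by
      have h3 := gw_length hw₃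
      simp only [List.length_append, List.length_cons, List.length_singleton,
        List.cons_append] at h3 ⊢
      omega
    obtain ⟨es', xs', hgw, hnd, hh, hl, hsub⟩ := IH _ hlt hnew rfl
    refine ⟨es', xs', hgw, hnd, ?_, ?_, ?_⟩
    · rw [hh]
      have := list_head?_append_cons l₁ a l₃ (l₂ ++ a :: l₃)
      simpa using this
    · rw [hl, list_getLast?_append_cons l₁ a l₃]
      have h1 := list_getLast?_append_cons (l₁ ++ a :: l₂) a l₃
      simp only [List.append_assoc, List.cons_append] at h1 ⊢
      rw [h1]
    · intro y hy
      have := hsub y hy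
      simp only [List.mem_append, List.mem_cons] at this ⊢
      tauto

end MGraph
/-! ### From explicit closed walks to circles -/

namespace MGraph

variable {N X : Type*} {G : MGraph N X}

theorem gw_links {es : List X} {xs : List N} (h : G.GW es xs) {e : X}
    (he : e ∈ es) : G.IsLink e := by
  obtain ⟨a, b, hab, hends⟩ := gw_link h he
  unfold IsLink
  rw [hends]
  rw [Finset.card_insert_of_notMem (by simpa using hab), Finset.card_singleton]

theorem gw_head_reach {S : Set X} : ∀ {es : List X} {xs : List N}, G.GW es xs →
    (∀ e ∈ es, e ∈ S) → ∀ {e₀ b : X}, es.head? = some e₀ → b ∈ es →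
    Relation.ReflTransGen
      (fun x y => x ∈ S ∧ y ∈ S ∧ ∃ v : N, v ∈ G.ends x ∧ v ∈ G.ends y) e₀ b := by
  intro es
  induction es with
  | nil => intro xs h hsub e₀ b he₀ hb; simp at hb
  | cons e es ih =>
      intro xs h hsub e₀ b he₀ hb
      simp only [List.head?_cons, Option.some.injEq] at he₀
      subst he₀
      obtain ⟨u, w, xs'', rfl, hne, hends, hw'⟩ := h
      rcases List.mem_cons.mp hb with rfl | hb'
      · exact Relation.ReflTransGen.refl
      · cases es with
        | nil => simp at hb'
        | cons e' es' =>
            have step : e ∈ S ∧ e' ∈ S ∧ ∃ v : N, v ∈ G.ends e ∧ v ∈ G.ends e' := by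
              refine ⟨hsub e (List.mem_cons_self),
                hsub e' (List.mem_cons_of_mem _ (List.mem_cons_self)), w, ?_, ?_⟩
              · rw [hends]; simp
              · obtain ⟨u2, w2, xs3, hx2, hne2, hends2, _⟩ := hw'
                simp only [List.cons.injEq] at hx2
                rw [hends2, ← hx2.1]; simp
            exact Relation.ReflTransGen.head step
              (ih hw' (fun x hx => hsub x (List.mem_cons_of_mem _ hx)) rfl hb')

theorem gw_chain_conn {es : List X} {xs : List N} (h : G.GW es xs) (S : Set X)
    (hS : ∀ e ∈ es, e ∈ S) {a b : X} (ha : a ∈ es) (hb : b ∈ es) :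
    Relation.ReflTransGen
      (fun x y => x ∈ S ∧ y ∈ S ∧ ∃ v : N, v ∈ G.ends x ∧ v ∈ G.ends y) a b := by
  have hsymm : Symmetric
      (fun x y => x ∈ S ∧ y ∈ S ∧ ∃ v : N, v ∈ G.ends x ∧ v ∈ G.ends y) := by
    rintro x y ⟨h1, h2, v, hv1, hv2⟩; exact ⟨h2, h1, v, hv2, hv1⟩
  cases es with
  | nil => simp at ha
  | cons e es' =>
      have h1 := gw_head_reach h hS (e₀ := e) rfl ha
      have h2 := gw_head_reach h hS (e₀ := e) rfl hb
      exact Relation.ReflTransGen.trans ((@Relation.ReflTransGen.stdSymm _ _ ⟨fun a b h => hsymm h⟩).symm _ _ h1) h2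

theorem filter_cons_length {α : Type*} (p : α → Bool) (e : α) (es : List α) :
    (List.filter p (e :: es)).length
      = (if p e = true then 1 else 0) + (es.filter p).length := by
  rw [List.filter_cons]
  by_cases h : p e = true
  · rw [if_pos h, if_pos h]
    simp [Nat.add_comm]
  · rw [if_neg h, if_neg h]
    simp

theorem count_cons_eq {α : Type*} [DecidableEq α] (a b : α) (l : List α) :
    (b :: l).count a = l.count a + (if a = b then 1 else 0) := by
  rw [List.count_cons]
  congr 1
  by_cases h : a = b
  · subst h; simp
  · rw [if_neg (by simpa using (Ne.symm h)), if_neg h]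

theorem gw_count_ends {es : List X} {xs : List N} (h : G.GW es xs) (v : N) :
    (es.filter (fun e => decide (v ∈ G.ends e))).length
      = xs.dropLast.count v + xs.tail.count v := by
  induction es generalizing xs with
  | nil =>
      obtain ⟨u, rfl⟩ := h
      simp
  | cons e es ih =>
      obtain ⟨u, w, xs', rfl, hne, hends, h⟩ := h
      have ihh := ih h
      simp only [List.tail_cons] at ihh
      have hdl : (u :: w :: xs').dropLast = u :: (w :: xs').dropLast := by
        simp [List.dropLast]
      rw [hdl, List.tail_cons, count_cons_eq v u, count_cons_eq v w, filter_cons_length,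
        ihh]
      have hmem : (v ∈ G.ends e) ↔ (v = u ∨ v = w) := by
        rw [hends]; simp
      have hsplit2 : (if (decide (v ∈ G.ends e)) = true then 1 else 0)
          = (if v = u then 1 else 0) + (if v = w then 1 else 0) := by
        by_cases hvu : v = u
        · have hvw : v ≠ w := fun hw' => hne (hvu.symm.trans hw')
          rw [if_pos (by rw [decide_eq_true_eq, hmem]; exact Or.inl hvu), if_pos hvu, if_neg hvw]
        · by_cases hvw : v = w
          · rw [if_pos (by rw [decide_eq_true_eq, hmem]; exact Or.inr hvw), if_neg hvu, if_pos hvw]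
          · rw [if_neg (by simp [hmem, hvu, hvw]), if_neg hvu, if_neg hvw]
      rw [hsplit2]
      omega

theorem count_eq_one_of_nodup {α : Type*} {l : List α} (hnd : l.Nodup) {a : α}
    (ha : a ∈ l) : l.count a = 1 := by
  have h1 : l.count a ≤ 1 := List.nodup_iff_count_le_one.mp hnd a
  have h2 : 0 < l.count a := List.count_pos_iff.mpr ha
  omega

/-- A closed walk with distinct edges and distinct nodes (except for the closure)
is a circle. -/
theorem gw_circle {es : List X} {z : N} {ys : List N}
    (h : G.GW es (z :: ys)) (hlast : (z :: ys).getLast? = some z) (hne : es ≠ [])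
    (hnd : (z :: ys).dropLast.Nodup) (hend : es.Nodup) :
    G.IsCircle es.toFinset := by
  have hys : ys ≠ [] := by
    intro hy
    subst hy
    have hlen := gw_length h
    simp only [List.length_cons, List.length_nil] at hlen
    exact hne (List.length_eq_zero_iff.mp (by omega))
  have hdl : (z :: ys).dropLast = z :: ys.dropLast := by
    cases ys with
    | nil => exact absurd rfl hys
    | cons y ys' => simp [List.dropLast]
  have hylast : ys.getLast hys = z := by
    have h1 : (z :: ys).getLast? = ys.getLast? := by
      cases ys with
      | nil => exact absurd rfl hys
      | cons y ys' => simp [List.getLast?_cons_cons]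
    rw [h1, List.getLast?_eq_getLast hys] at hlast
    exact Option.some.inj hlast
  have hysplit : ys = ys.dropLast ++ [z] := by
    conv_lhs => rw [← List.dropLast_append_getLast hys]
    rw [hylast]
  rw [hdl] at hnd
  have hznotin : z ∉ ys.dropLast := (List.nodup_cons.mp hnd).1
  have hnd' : ys.dropLast.Nodup := (List.nodup_cons.mp hnd).2
  refine ⟨?_, ?_, ?_, ?_⟩
  · obtain ⟨e, es', rfl⟩ := List.exists_cons_of_ne_nil hne
    exact ⟨e, by simp⟩
  · intro e he
    exact gw_links h (List.mem_toFinset.mp he)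
  · intro e he f hf
    exact gw_chain_conn h _ (fun x hx => List.mem_toFinset.mpr hx)
      (List.mem_toFinset.mp (by exact_mod_cast he)) (List.mem_toFinset.mp (by exact_mod_cast hf))
  · intro v hv
    have hvmem : ∃ e ∈ es, v ∈ G.ends e := by
      obtain ⟨e, he, hve⟩ := Finset.mem_biUnion.mp hv
      exact ⟨e, List.mem_toFinset.mp he, hve⟩
    have hvxs : v ∈ z :: ys := by
      obtain ⟨e, he, hve⟩ := hvmem
      exact gw_ends_subset h he v hve
    have hvdl : v ∈ z :: ys.dropLast := by
      rcases List.mem_cons.mp hvxs with rfl | hvy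
      · exact List.mem_cons_self
      · rw [hysplit] at hvy
        rcases List.mem_append.mp hvy with h1 | h1
        · exact List.mem_cons_of_mem _ h1
        · simp only [List.mem_singleton] at h1
          subst h1
          exact List.mem_cons_self
    have hdeg : G.degreeIn es.toFinset v
        = (es.filter (fun e => decide (v ∈ G.ends e))).length := by
      unfold degreeIn
      have hset : es.toFinset.filter (fun e => v ∈ G.ends e)
          = (es.filter (fun e => decide (v ∈ G.ends e))).toFinset := by
        ext x
        simp [List.mem_filter]
      rw [hset, List.toFinset_card_of_nodup (hend.filter _)]
    rw [hdeg, gw_count_ends h v]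
    have hd1 : (z :: ys).dropLast.count v = 1 := by
      rw [hdl]
      exact count_eq_one_of_nodup hnd hvdl
    have hd2 : (z :: ys).tail.count v = 1 := by
      simp only [List.tail_cons]
      conv_lhs => rw [hysplit]
      rw [List.count_append]
      by_cases hvz : v = z
      · subst hvz
        rw [List.count_eq_zero_of_not_mem hznotin]
        simp
      · have hvd : v ∈ ys.dropLast := by
          rcases List.mem_cons.mp hvdl with h1 | h1
          · exact absurd h1 hvz
          · exact h1
        rw [count_eq_one_of_nodup hnd' hvd]
        simp [List.count_singleton', hvz, Ne.symm hvz]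
    omega

end MGraph
/-! ### Gains along walks -/

theorem finset_pair_eq {N : Type*} {a b u v : N} (hne : u ≠ v)
    (h : ({a, b} : Finset N) = {u, v}) : (a = u ∧ b = v) ∨ (a = v ∧ b = u) := by
  have ha : a = u ∨ a = v := by
    have : a ∈ ({u, v} : Finset N) := h ▸ (Finset.mem_insert_self a {b})
    simpa using this
  have hb : b = u ∨ b = v := by
    have hb0 : b ∈ ({a, b} : Finset N) := by simp
    rw [h] at hb0
    simpa using hb0
  have hu : u = a ∨ u = b := by
    have hu0 : u ∈ ({u, v} : Finset N) := by simp
    rw [← h] at hu0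
    simpa using hu0
  have hv : v = a ∨ v = b := by
    have hv0 : v ∈ ({u, v} : Finset N) := by simp
    rw [← h] at hv0
    simpa using hv0
  rcases ha with rfl | rfl
  · left
    refine ⟨rfl, ?_⟩
    rcases hb with rfl | rfl
    · rcases hv with rfl | rfl
      · exact absurd rfl hne
      · exact absurd rfl hne
    · rfl
  · right
    refine ⟨rfl, ?_⟩
    rcases hb with rfl | rfl
    · rfl
    · rcases hu with rfl | rfl
      · exact absurd rfl hne
      · exact absurd rfl hne

namespace GainGraph

variable {N E Γ : Type*} [Group Γ] (Φ : GainGraph N E Γ)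

theorem ogain_cases {e : E} {u v : N} (hne : u ≠ v) (hends : Φ.ends e = {u, v}) :
    (Φ.src e = u ∧ Φ.tgt e = v ∧ Φ.ogain e u v = Φ.gain e
        ∧ Φ.ogain e v u = (Φ.gain e)⁻¹) ∨
    (Φ.src e = v ∧ Φ.tgt e = u ∧ Φ.ogain e u v = (Φ.gain e)⁻¹
        ∧ Φ.ogain e v u = Φ.gain e) := by
  have hpair : ({Φ.src e, Φ.tgt e} : Finset N) = {u, v} := by
    rw [← Φ.ends_eq e, hends]
  rcases finset_pair_eq hne hpair with ⟨h1, h2⟩ | ⟨h1, h2⟩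
  · left
    refine ⟨h1, h2, ?_, ?_⟩
    · unfold ogain; rw [if_pos ⟨h1, h2⟩]
    · unfold ogain
      rw [if_neg]
      rintro ⟨hh, -⟩
      exact hne (h1 ▸ hh)
  · right
    refine ⟨h1, h2, ?_, ?_⟩
    · unfold ogain
      rw [if_neg]
      rintro ⟨hh, -⟩
      exact hne (hh ▸ h1)
    · unfold ogain; rw [if_pos ⟨h1, h2⟩]

theorem ogain_inv {e : E} {u v : N} (hne : u ≠ v) (hends : Φ.ends e = {u, v}) :
    Φ.ogain e v u = (Φ.ogain e u v)⁻¹ := by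
  rcases Φ.ogain_cases hne hends with ⟨-, -, h3, h4⟩ | ⟨-, -, h3, h4⟩ <;>
    rw [h3, h4] <;> simp

theorem ogain_of_potential {e : E} {u v : N} {θ : N → Γ}
    (hgain : Φ.gain e = (θ (Φ.src e))⁻¹ * θ (Φ.tgt e))
    (hne : u ≠ v) (hends : Φ.ends e = {u, v}) :
    Φ.ogain e u v = (θ u)⁻¹ * θ v := by
  rcases Φ.ogain_cases hne hends with ⟨h1, h2, h3, -⟩ | ⟨h1, h2, h3, -⟩
  · rw [h3, hgain, h1, h2]
  · rw [h3, hgain, h1, h2]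
    group

theorem gain_potential_of_ogain_eq {e e' : E} {u v : N} {θ : N → Γ}
    (hne : u ≠ v) (hends : Φ.ends e = {u, v}) (hends' : Φ.ends e' = {u, v})
    (hgain : Φ.gain e = (θ (Φ.src e))⁻¹ * θ (Φ.tgt e))
    (h0 : Φ.ogain e' u v = Φ.ogain e u v) :
    Φ.gain e' = (θ (Φ.src e'))⁻¹ * θ (Φ.tgt e') := by
  have hval : Φ.ogain e' u v = (θ u)⁻¹ * θ v := by
    rw [h0, Φ.ogain_of_potential hgain hne hends]
  rcases Φ.ogain_cases hne hends' with ⟨h1, h2, h3, -⟩ | ⟨h1, h2, h3, -⟩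
  · rw [h1, h2, ← hval, h3]
  · rw [h1, h2]
    have : Φ.gain e' = (Φ.ogain e' u v)⁻¹ := by rw [h3]; simp
    rw [this, hval]
    group

/-- Switched gain in a given direction. -/
noncomputable def sg (ζ : N → Γ) (e : E) (u v : N) : Γ := (ζ u)⁻¹ * Φ.ogain e u v * ζ v

theorem sg_inv {ζ : N → Γ} {e : E} {u v : N} (hne : u ≠ v)
    (hends : Φ.ends e = {u, v}) : Φ.sg ζ e v u = (Φ.sg ζ e u v)⁻¹ := by
  unfold sg
  rw [Φ.ogain_inv hne hends]
  group

end GainGraph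

/-! ### Products of switched gains along a walk -/

section SProd

variable {N E Γ : Type*} [Group Γ]

/-- Product of `sgf` values along a walk. -/
def sprod (sgf : E → N → N → Γ) : List E → List N → Γ
  | e :: es, a :: b :: xs => sgf e a b * sprod sgf es (b :: xs)
  | _, _ => 1

@[simp] theorem sprod_nil (sgf : E → N → N → Γ) (xs : List N) :
    sprod sgf [] xs = 1 := rfl

@[simp] theorem sprod_cons (sgf : E → N → N → Γ) (e : E) (es : List E) (a b : N)
    (xs : List N) :
    sprod sgf (e :: es) (a :: b :: xs) = sgf e a b * sprod sgf es (b :: xs) := rfl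

/-- A property holding at every step of a walk. -/
def SHold (P : E → N → N → Prop) : List E → List N → Prop
  | [], _ => True
  | e :: es, xs => ∃ a b xs', xs = a :: b :: xs' ∧ P e a b ∧ SHold P es (b :: xs')

@[simp] theorem shold_nil (P : E → N → N → Prop) (xs : List N) : SHold P [] xs := trivial

theorem shold_cons {P : E → N → N → Prop} {e : E} {es : List E} {xs : List N} :
    SHold P (e :: es) xs ↔
      ∃ a b xs', xs = a :: b :: xs' ∧ P e a b ∧ SHold P es (b :: xs') := Iff.rfl

theorem shold_mono {P Q : E → N → N → Prop} (h : ∀ e a b, P e a b → Q e a b) :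
    ∀ {es : List E} {xs : List N}, SHold P es xs → SHold Q es xs := by
  intro es
  induction es with
  | nil => intro xs _; trivial
  | cons e es ih =>
      rintro xs ⟨a, b, xs', rfl, hP, hrest⟩
      exact ⟨a, b, xs', rfl, h e a b hP, ih hrest⟩

theorem sprod_ones {sgf : E → N → N → Γ} :
    ∀ {es : List E} {xs : List N}, SHold (fun e a b => sgf e a b = 1) es xs →
      sprod sgf es xs = 1 := by
  intro es
  induction es with
  | nil => intro xs _; simp
  | cons e es ih =>
      rintro xs ⟨a, b, xs', rfl, h1, hrest⟩
      rw [sprod_cons, h1, ih hrest, one_mul]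

theorem sprod_append {sgf : E → N → N → Γ} :
    ∀ {es₁ : List E} {xs₁ : List N} {es₂ : List E} {m : N} {xs₂ : List N},
      es₁.length = xs₁.length →
      sprod sgf (es₁ ++ es₂) (xs₁ ++ m :: xs₂)
        = sprod sgf es₁ (xs₁ ++ [m]) * sprod sgf es₂ (m :: xs₂) := by
  intro es₁
  induction es₁ with
  | nil =>
      intro xs₁ es₂ m xs₂ hlen
      have : xs₁ = [] := List.length_eq_zero_iff.mp hlen.symm
      subst this
      simp
  | cons e es₁ ih =>
      intro xs₁ es₂ m xs₂ hlen
      cases xs₁ with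
      | nil => simp at hlen
      | cons a xs₁' =>
          simp only [List.length_cons, Nat.add_right_cancel_iff] at hlen
          cases xs₁' with
          | nil =>
              have : es₁ = [] := List.length_eq_zero_iff.mp hlen
              subst this
              simp [mul_assoc]
          | cons b t =>
              simp only [List.cons_append, sprod_cons]
              have h1 : b :: (t ++ m :: xs₂) = (b :: t) ++ m :: xs₂ := rfl
              have h2 : b :: (t ++ [m]) = (b :: t) ++ [m] := rfl
              rw [h1, h2, ih (by simpa using hlen), mul_assoc]

theorem sprod_potential {sgf : E → N → N → Γ} {κ : N → Γ} :
    ∀ {es : List E} {xs : List N} {u v : N},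
      SHold (fun e a b => sgf e a b = (κ a)⁻¹ * κ b) es xs →
      xs.length = es.length + 1 →
      xs.head? = some u → xs.getLast? = some v →
      sprod sgf es xs = (κ u)⁻¹ * κ v := by
  intro es
  induction es with
  | nil =>
      intro xs u v _ hlen hh hl
      cases xs with
      | nil => simp at hh
      | cons a t =>
          have : t = [] := by
            simp only [List.length_cons, List.length_nil] at hlen
            exact List.length_eq_zero_iff.mp (by omega)
          subst this
          simp only [List.head?_cons, Option.some.injEq] at hh
          simp only [List.getLast?_singleton, Option.some.injEq] at hl
          subst hh; subst hl
          simp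
  | cons e es ih =>
      rintro xs u v ⟨a, b, xs', rfl, h1, hrest⟩ hlen hh hl
      simp only [List.head?_cons, Option.some.injEq] at hh
      subst hh
      rw [sprod_cons, h1]
      have hlast' : (b :: xs').getLast? = some v := by
        rw [← hl]
        simp [List.getLast?_cons_cons]
      rw [ih hrest (by simpa using hlen) rfl hlast']
      group

end SProd
/-! ### Graph-theoretic consequences of inseparability -/

namespace MGraph

variable {N E' : Type*} {Δ : MGraph N E'}

theorem simple_ends_two (hsimple : Δ.IsSimple) (e : E') :
    ∃ a b : N, a ≠ b ∧ Δ.ends e = {a, b} := by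
  obtain ⟨a, b, hab, h⟩ := Finset.card_eq_two.mp (hsimple.1 e)
  exact ⟨a, b, hab, h⟩

theorem ends_eq_of_mem_two (hsimple : Δ.IsSimple) {e : E'} {u z : N}
    (hu : u ∈ Δ.ends e) (hz : z ∈ Δ.ends e) (hne : u ≠ z) :
    Δ.ends e = {u, z} := by
  have hsub : ({u, z} : Finset N) ⊆ Δ.ends e := by
    intro x hx
    rcases Finset.mem_insert.mp hx with rfl | hx
    · exact hu
    · rw [Finset.mem_singleton] at hx
      subst hx
      exact hz
  have hcard : ({u, z} : Finset N).card = 2 := by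
    rw [Finset.card_insert_of_notMem (by simpa using hne), Finset.card_singleton]
  exact (Finset.eq_of_subset_of_card_le hsub (by rw [hsimple.1 e, hcard])).symm

theorem conn_walk (hsimple : Δ.IsSimple) {u v : N}
    (h : Δ.nodeConn Set.univ u v) :
    ∃ es xs, Δ.GW es xs ∧ xs.head? = some u ∧ xs.getLast? = some v := by
  induction h using Relation.ReflTransGen.head_induction_on with
  | refl => exact ⟨[], [v], ⟨v, rfl⟩, rfl, rfl⟩
  | head hadj _ ih =>
      rename_i a c _
      obtain ⟨es, xs, hw, hh, hl⟩ := ih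
      by_cases hac : a = c
      · subst hac
        exact ⟨es, xs, hw, hh, hl⟩
      · obtain ⟨e, -, hae, hce⟩ := hadj
        have hends := ends_eq_of_mem_two hsimple hae hce hac
        cases xs with
        | nil => simp at hh
        | cons x xs' =>
            simp only [List.head?_cons, Option.some.injEq] at hh
            subst hh
            refine ⟨e :: es, a :: x :: xs', ⟨a, x, xs', rfl, hac, hends, hw⟩, rfl, ?_⟩
            rw [← hl]
            simp [List.getLast?_cons_cons]

/-- Deleting a node of an inseparable graph of order `≥ 3` leaves the rest
connected: there is a path between any two other nodes avoiding the node. -/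
theorem nocut (hsimple : Δ.IsSimple) (hinsep : Δ.IsInseparable)
    (horder : ∃ u v w : N, u ≠ v ∧ u ≠ w ∧ v ≠ w)
    {v₀ u w : N} (hu : u ≠ v₀) (hw : w ≠ v₀) :
    ∃ es xs, Δ.GW es xs ∧ xs.head? = some u ∧ xs.getLast? = some w ∧
      v₀ ∉ xs ∧ xs.Nodup := by
  -- every node is on an edge
  have node_edge : ∀ x : N, ∃ e : E', x ∈ Δ.ends e := by
    intro x
    obtain ⟨a, b, c, hab, hac, hbc⟩ := horder
    have hy : ∃ y : N, y ≠ x := by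
      by_cases hxa : x = a
      · exact ⟨b, fun hh => hab (hh ▸ hxa).symm⟩
      · exact ⟨a, fun hh => hxa hh.symm⟩
    obtain ⟨y, hy⟩ := hy
    have hconn : Δ.nodeConn Set.univ x y := hinsep.1 x y
    obtain ⟨z, hz⟩ := Relation.ReflTransGen.cases_head hconn |>.resolve_left
      (fun hh => hy hh.symm)
    obtain ⟨e, -, hxe, -⟩ := hz.1
    exact ⟨e, hxe⟩
  set R : N → Prop := fun x => x ≠ v₀ ∧ ∃ es xs, Δ.GW es xs ∧ xs.head? = some u ∧
    xs.getLast? = some x ∧ v₀ ∉ xs with hR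
  have hRu : R u := ⟨hu, [], [u], ⟨u, rfl⟩, rfl, rfl, by simpa using (Ne.symm hu)⟩
  have hext : ∀ x z : N, R x → z ≠ v₀ → ∀ e : E', x ∈ Δ.ends e → z ∈ Δ.ends e →
      x ≠ z → R z := by
    rintro x z ⟨hxv, es, xs, hwk, hh, hl, hav⟩ hzv e hxe hze hxz
    have hends := ends_eq_of_mem_two hsimple hxe hze hxz
    have hxsne : xs ≠ [] := gw_ne_nil hwk
    have hxs : xs = xs.dropLast ++ [x] := by
      conv_lhs => rw [← List.dropLast_append_getLast hxsne]
      congr 1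
      rw [List.getLast?_eq_getLast hxsne] at hl
      rw [Option.some.inj hl]
    refine ⟨hzv, es ++ [e], xs.dropLast ++ x :: [z], ?_, ?_, ?_, ?_⟩
    · exact gw_append (by rw [← hxs]; exact hwk) ⟨x, z, [], rfl, hxz, hends, ⟨z, rfl⟩⟩
    · rw [← hh]
      conv_rhs => rw [hxs]
      exact list_head?_append_cons _ x [z] []
    · rw [list_getLast?_append_cons]
      simp
    · intro hv₀
      rcases List.mem_append.mp hv₀ with h1 | h1
      · exact hav (by rw [hxs]; exact List.mem_append.mpr (Or.inl h1))
      · rcases List.mem_cons.mp h1 with h2 | h2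
        · exact hxv h2.symm
        · simp only [List.mem_singleton] at h2
          exact hzv h2.symm
  have hRw : R w := by
    by_contra hRw
    set A : Set E' := {e | ∃ x ∈ Δ.ends e, R x} with hA
    have hAne : A.Nonempty := by
      obtain ⟨e, he⟩ := node_edge u
      exact ⟨e, u, he, hRu⟩
    have hBne : Aᶜ.Nonempty := by
      obtain ⟨e, he⟩ := node_edge w
      refine ⟨e, ?_⟩
      rintro ⟨x, hxe, hx⟩
      by_cases hxw : x = w
      · exact hRw (hxw ▸ hx)
      · exact hRw (hext x w hx hw e hxe he (fun hh => hxw hh))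
    obtain ⟨z₁, z₂, hz12, hz1A, hz1B, hz2A, hz2B⟩ :=
      hinsep.2 A Aᶜ hAne hBne disjoint_compl_right (Set.union_compl_self A)
    have hnodeA : ∀ z : N, z ∈ Δ.nodeSet A → z = v₀ ∨ R z := by
      rintro z ⟨e, ⟨x, hxe, hx⟩, hze⟩
      by_cases hzv : z = v₀
      · exact Or.inl hzv
      · by_cases hzx : z = x
        · exact Or.inr (hzx ▸ hx)
        · exact Or.inr (hext x z hx hzv e hxe hze (fun hh => hzx hh.symm))
    have hnodeB : ∀ z : N, z ∈ Δ.nodeSet Aᶜ → ¬ R z := by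
      rintro z ⟨e, heB, hze⟩ hz
      exact heB ⟨z, hze, hz⟩
    have h1 : z₁ = v₀ := (hnodeA z₁ hz1A).resolve_right (hnodeB z₁ hz1B)
    have h2 : z₂ = v₀ := (hnodeA z₂ hz2A).resolve_right (hnodeB z₂ hz2B)
    exact hz12 (h1.trans h2.symm)
  obtain ⟨-, es, xs, hwk, hh, hl, hav⟩ := hRw
  obtain ⟨es', xs', hw', hnd, hh', hl', hsub⟩ := gw_to_path hwk
  exact ⟨es', xs', hw', hh'.trans hh, hl'.trans hl,
    fun hmem => hav (hsub v₀ hmem), hnd⟩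

end MGraph
/-! ### The solvability engine -/

namespace MGraph

variable {N X : Type*} {G : MGraph N X}

theorem gw_circle' {es : List X} {xs : List N} {z : N}
    (h : G.GW es xs) (hh : xs.head? = some z) (hl : xs.getLast? = some z)
    (hne : es ≠ []) (hnd : xs.dropLast.Nodup) (hend : es.Nodup) :
    G.IsCircle es.toFinset := by
  cases xs with
  | nil => simp at hh
  | cons z' ys =>
      simp only [List.head?_cons, Option.some.injEq] at hh
      subst hh
      exact gw_circle h hl hne hnd hend

theorem gw_mid : ∀ {xs₁ : List N} {es₁ : List X} {f : X} {es₂ : List X}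
    {a b : N} {xs₂ : List N},
    G.GW (es₁ ++ f :: es₂) (xs₁ ++ a :: b :: xs₂) → es₁.length = xs₁.length →
    a ≠ b ∧ G.ends f = {a, b} := by
  intro xs₁
  induction xs₁ with
  | nil =>
      intro es₁ f es₂ a b xs₂ h hlen
      have : es₁ = [] := List.length_eq_zero_iff.mp hlen
      subst this
      obtain ⟨u, w, xs', hx, hne, hends, -⟩ := h
      simp only [List.nil_append, List.cons.injEq] at hx
      obtain ⟨rfl, rfl, -⟩ := hx
      exact ⟨hne, hends⟩
  | cons x xs₁' ih =>
      intro es₁ f es₂ a b xs₂ h hlen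
      cases es₁ with
      | nil => simp at hlen
      | cons e es₁' =>
          obtain ⟨u, w, xs', hx, hne, hends, h'⟩ := h
          simp only [List.cons_append, List.cons.injEq] at hx
          obtain ⟨rfl, hx⟩ := hx
          rw [← hx] at h'
          exact ih h' (by simpa using hlen)

end MGraph

section Star

variable {N E E' Γ : Type*} [Group Γ] {Δ : MGraph N E'} {Φ : GainGraph N E Γ}
  {p : E → E'} {ζ : N → Γ}

theorem list_forall₂_append {α β : Type*} {R : α → β → Prop} :
    ∀ {l₁ : List α} {u₁ : List β} {l₂ : List α} {u₂ : List β},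
      List.Forall₂ R l₁ u₁ → List.Forall₂ R l₂ u₂ →
      List.Forall₂ R (l₁ ++ l₂) (u₁ ++ u₂) := by
  intro l₁ u₁ l₂ u₂ h1 h2
  induction h1 with
  | nil => simpa using h2
  | cons h _ ih => exact List.Forall₂.cons h ih

theorem forall2_map {LS : List E} {es : List E'}
    (h : List.Forall₂ (fun e g => p e = g) LS es) : LS.map p = es := by
  induction h with
  | nil => rfl
  | cons h _ ih => simp [ih, h]

theorem gw_lift (hends : ∀ e, Φ.ends e = Δ.ends (p e)) :
    ∀ {LS : List E} {es : List E'} {xs : List N},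
      List.Forall₂ (fun e g => p e = g) LS es → Δ.GW es xs →
      Φ.toMGraph.GW LS xs := by
  intro LS
  induction LS with
  | nil =>
      intro es xs hf h
      cases hf
      exact h
  | cons e LS ih =>
      intro es xs hf h
      cases hf with
      | cons hpe hf' =>
          obtain ⟨u, w, xs', rfl, hne, hends', h'⟩ := h
          exact ⟨u, w, xs', rfl, hne, by rw [hends, hpe]; exact hends', ih hf' h'⟩

theorem sh_balanced {θ : N → Γ} :
    ∀ {LS : List E} {xs : List N}, Φ.toMGraph.GW LS xs →
      (∀ e ∈ LS, Φ.gain e = (θ (Φ.src e))⁻¹ * θ (Φ.tgt e)) →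
      SHold (fun e a b => Φ.sg ζ e a b = (θ a * ζ a)⁻¹ * (θ b * ζ b)) LS xs := by
  intro LS
  induction LS with
  | nil => intro xs _ _; trivial
  | cons e LS ih =>
      intro xs h hθ
      obtain ⟨u, w, xs', rfl, hne, hends, h'⟩ := h
      refine ⟨u, w, xs', rfl, ?_, ih h' (fun x hx => hθ x (List.mem_cons_of_mem _ hx))⟩
      have hog := Φ.ogain_of_potential (hθ e (List.mem_cons_self)) hne hends
      have : Φ.sg ζ e u w = (θ u * ζ u)⁻¹ * (θ w * ζ w) := by
        unfold GainGraph.sg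
        rw [hog]
        group
      exact this

/-- The engine: solving for the edge over `f` in a lifted circle. -/
theorem star
    (hexp : IsBiasedExpansion Φ.toMGraph {C | Φ.BalancedCircle C} Δ p)
    {es₁ es₂ : List E'} {f : E'} {xs₁ xs₂ : List N} {a b z : N}
    (hw : Δ.GW (es₁ ++ f :: es₂) (xs₁ ++ a :: b :: xs₂))
    (hlen1 : es₁.length = xs₁.length)
    (hh : (xs₁ ++ a :: b :: xs₂).head? = some z)
    (hl : (xs₁ ++ a :: b :: xs₂).getLast? = some z)
    (hnd : (xs₁ ++ a :: b :: xs₂).dropLast.Nodup)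
    (hend : (es₁ ++ f :: es₂).Nodup)
    {LS₁ LS₂ : List E}
    (h₁ : List.Forall₂ (fun e g => p e = g) LS₁ es₁)
    (h₂ : List.Forall₂ (fun e g => p e = g) LS₂ es₂) :
    ∃! e : E, p e = f ∧ Φ.sg ζ e a b
      = (sprod (Φ.sg ζ) LS₁ (xs₁ ++ [a]))⁻¹ * (sprod (Φ.sg ζ) LS₂ (b :: xs₂))⁻¹ := by
  classical
  obtain ⟨hsurj, hpends, hcond⟩ := hexp
  set es : List E' := es₁ ++ f :: es₂ with hes
  set xs : List N := xs₁ ++ a :: b :: xs₂ with hxs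
  set P₁ : Γ := sprod (Φ.sg ζ) LS₁ (xs₁ ++ [a]) with hP₁
  set P₂ : Γ := sprod (Φ.sg ζ) LS₂ (b :: xs₂) with hP₂
  have hesne : es ≠ [] := by simp [hes]
  have hC : Δ.IsCircle es.toFinset := MGraph.gw_circle' hw hh hl hesne hnd hend
  have hfC : f ∈ es.toFinset := by simp [hes]
  have hfab : a ≠ b ∧ Δ.ends f = {a, b} := MGraph.gw_mid hw hlen1
  -- the section function
  set L : List E := LS₁ ++ LS₂ with hL
  have hLmap : L.map p = es₁ ++ es₂ := forall2_map (list_forall₂_append h₁ h₂)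
  have hfnotin : f ∉ es₁ ++ es₂ := by
    intro hmem
    have hcnt := List.nodup_iff_count_le_one.mp hend f
    have h1 : List.count f es = List.count f es₁ + (List.count f es₂ + 1) := by
      rw [hes, List.count_append, List.count_cons]
      simp
    have h2 : 0 < List.count f (es₁ ++ es₂) := List.count_pos_iff.mpr hmem
    rw [List.count_append] at h2
    omega
  have hnd12 : (es₁ ++ es₂).Nodup := by
    have hsub : (es₁ ++ es₂).Sublist es := by
      rw [hes]
      exact (List.sublist_cons_self f es₂).append_left es₁
    exact hsub.nodup hend
  have hndL : L.Nodup := List.Nodup.of_map p (by rw [hLmap]; exact hnd12)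
  have hinjL : ∀ x ∈ L, ∀ y ∈ L, p x = p y → x = y := by
    have := List.inj_on_of_nodup_map (f := p) (l := L) (by rw [hLmap]; exact hnd12)
    exact fun x hx y hy hxy => this hx hy hxy
  set s : E' → E := fun g =>
    if hg : ∃ x, x ∈ L ∧ p x = g then hg.choose else (hsurj g).choose with hs
  have hs0 : ∀ g, p (s g) = g := by
    intro g
    rw [hs]
    by_cases hg : ∃ x, x ∈ L ∧ p x = g
    · simp only [dif_pos hg]
      exact hg.choose_spec.2
    · simp only [dif_neg hg]
      exact (hsurj g).choose_spec
  have hsmem : ∀ g, (∃ x, x ∈ L ∧ p x = g) → s g ∈ L := by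
    intro g hg
    rw [hs]
    simp only [dif_pos hg]
    exact hg.choose_spec.1
  have himg : (es.toFinset.erase f).image s = L.toFinset := by
    ext x
    simp only [Finset.mem_image, Finset.mem_erase, List.mem_toFinset]
    constructor
    · rintro ⟨g, ⟨hgf, hges⟩, rfl⟩
      have hg12 : g ∈ es₁ ++ es₂ := by
        rw [hes] at hges
        rcases List.mem_append.mp hges with h1 | h1
        · exact List.mem_append.mpr (Or.inl h1)
        · rcases List.mem_cons.mp h1 with rfl | h2
          · exact absurd rfl hgf
          · exact List.mem_append.mpr (Or.inr h2)
      have : ∃ x, x ∈ L ∧ p x = g := by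
        rw [← hLmap] at hg12
        obtain ⟨x, hx, hxg⟩ := List.mem_map.mp hg12
        exact ⟨x, hx, hxg⟩
      exact hsmem g this
    · intro hx
      set g := p x with hg
      have hg12 : g ∈ es₁ ++ es₂ := by
        rw [← hLmap]
        exact List.mem_map.mpr ⟨x, hx, rfl⟩
      have hgf : g ≠ f := fun hh' => hfnotin (hh' ▸ hg12)
      have hges : g ∈ es := by
        rw [hes]
        rcases List.mem_append.mp hg12 with h1 | h1
        · exact List.mem_append.mpr (Or.inl h1)
        · exact List.mem_append.mpr (Or.inr (List.mem_cons_of_mem _ h1))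
      refine ⟨g, ⟨hgf, hges⟩, ?_⟩
      have hex : ∃ y, y ∈ L ∧ p y = g := ⟨x, hx, rfl⟩
      have h1 := hsmem g hex
      have h2 := hs0 g
      exact hinjL _ h1 _ hx (h2.trans hg)
  have hset : ∀ t : E, (es.toFinset.erase f).image s ∪ {t}
      = (LS₁ ++ t :: LS₂).toFinset := by
    intro t
    rw [himg]
    ext x
    simp only [Finset.mem_union, List.mem_toFinset, Finset.mem_singleton, hL,
      List.mem_append, List.mem_cons]
    tauto
  have hlift : ∀ t : E, p t = f → Φ.toMGraph.GW (LS₁ ++ t :: LS₂) xs := by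
    intro t ht
    exact gw_lift hpends (list_forall₂_append h₁ (List.Forall₂.cons ht h₂)) hw
  have hlenL1 : LS₁.length = xs₁.length := by
    have := congrArg List.length hLmap
    have h1 := congrArg List.length (forall2_map h₁)
    simp only [List.length_map] at h1
    omega
  have hprodt : ∀ t : E, sprod (Φ.sg ζ) (LS₁ ++ t :: LS₂) xs
      = P₁ * (Φ.sg ζ t a b * P₂) := by
    intro t
    rw [hxs, sprod_append hlenL1, sprod_cons]
  have hbal_prod : ∀ t : E, p t = f →
      Φ.BalancedCircle ((LS₁ ++ t :: LS₂).toFinset) →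
      sprod (Φ.sg ζ) (LS₁ ++ t :: LS₂) xs = 1 := by
    intro t ht hbc
    obtain ⟨θ, hθ⟩ := hbc.2
    have hsh := sh_balanced (ζ := ζ) (hlift t ht)
      (fun e he => hθ e (List.mem_toFinset.mpr he))
    have hlen : xs.length = (LS₁ ++ t :: LS₂).length + 1 :=
      MGraph.gw_length (hlift t ht)
    rw [sprod_potential hsh hlen hh hl]
    group
  -- apply the expansion axiom
  obtain ⟨t₀, ⟨ht₀p, ht₀B⟩, ht₀u⟩ := hcond es.toFinset hC f hfC s (fun g _ => hs0 g)
  have ht₀B' : Φ.BalancedCircle ((LS₁ ++ t₀ :: LS₂).toFinset) := by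
    rw [hset t₀] at ht₀B
    exact ht₀B
  have hval₀ : Φ.sg ζ t₀ a b = P₁⁻¹ * P₂⁻¹ := by
    have h' := hbal_prod t₀ ht₀p ht₀B'
    rw [hprodt t₀] at h'
    have hxid : Φ.sg ζ t₀ a b
        = P₁⁻¹ * (P₁ * (Φ.sg ζ t₀ a b * P₂)) * P₂⁻¹ := by group
    rw [hxid, h']
    group
  refine ⟨t₀, ⟨ht₀p, hval₀⟩, ?_⟩
  rintro e ⟨hep, hev⟩
  -- e has the same oriented gain as t₀
  have hsg_eq : Φ.sg ζ e a b = Φ.sg ζ t₀ a b := by rw [hev, hval₀]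
  have hog_eq : Φ.ogain e a b = Φ.ogain t₀ a b := by
    have h1 : (ζ a)⁻¹ * Φ.ogain e a b * ζ b = (ζ a)⁻¹ * Φ.ogain t₀ a b * ζ b := hsg_eq
    have h2 := mul_right_cancel h1
    exact mul_left_cancel h2
  -- the set with e is also a balanced circle
  apply ht₀u
  refine ⟨hep, ?_⟩
  rw [hset e]
  show Φ.BalancedCircle _
  have hends_e : Φ.ends e = {a, b} := by rw [hpends, hep, hfab.2]
  have hends_t₀ : Φ.ends t₀ = {a, b} := by rw [hpends, ht₀p, hfab.2]
  obtain ⟨θ, hθ⟩ := ht₀B'.2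
  constructor
  · -- circle
    have hndLS : (LS₁ ++ e :: LS₂).Nodup := by
      apply List.Nodup.of_map p
      rw [forall2_map (list_forall₂_append h₁ (List.Forall₂.cons hep h₂))]
      exact hend
    exact MGraph.gw_circle' (hlift e hep) hh hl (by simp) hnd hndLS
  · refine ⟨θ, ?_⟩
    intro x hx
    rw [List.mem_toFinset, List.mem_append, List.mem_cons] at hx
    rcases hx with hx | rfl | hx
    · exact hθ x (by rw [List.mem_toFinset]; exact List.mem_append.mpr (Or.inl hx))
    · exact Φ.gain_potential_of_ogain_eq hfab.1 hends_t₀ hends_e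
        (hθ t₀ (by simp)) hog_eq
    · exact hθ x (by
        rw [List.mem_toFinset]
        exact List.mem_append.mpr (Or.inr (List.mem_cons_of_mem _ hx)))

end Star
/-! ### BFS tree, chains, and the switching function -/

section BFS

theorem list_getLast?_cons_of_ne_nil {α : Type*} {l : List α} (h : l ≠ []) (a : α) :
    (a :: l).getLast? = l.getLast? := by
  cases l with
  | nil => exact absurd rfl h
  | cons b t => simp [List.getLast?_cons_cons]

theorem list_first_inter {α : Type*} {A : List α} {P : α → Prop}
    (hx : ∃ x ∈ A, P x) : ∃ A₁ c A₂, A = A₁ ++ c :: A₂ ∧ P c ∧ ∀ y ∈ A₁, ¬ P y := by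
  classical
  induction A with
  | nil => simp at hx
  | cons a t ih =>
      by_cases ha : P a
      · exact ⟨[], a, t, rfl, ha, by simp⟩
      · have : ∃ x ∈ t, P x := by
          obtain ⟨x, hxA, hxP⟩ := hx
          rcases List.mem_cons.mp hxA with rfl | hxt
          · exact absurd hxP ha
          · exact ⟨x, hxt, hxP⟩
        obtain ⟨A₁, c, A₂, rfl, hc, hA₁⟩ := ih this
        refine ⟨a :: A₁, c, A₂, rfl, hc, ?_⟩
        intro y hy
        rcases List.mem_cons.mp hy with rfl | hy'
        · exact ha
        · exact hA₁ y hy'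

variable {N E' Γ : Type*} [Group Γ]

noncomputable def bfsZ (v₀ : N) (d : N → ℕ) (par : N → N)
    (hpar : ∀ v, v ≠ v₀ → d (par v) < d v) (step : N → Γ) : N → Γ := fun v =>
  if h : v = v₀ then 1 else (step v)⁻¹ * bfsZ v₀ d par hpar step (par v)
termination_by v => d v
decreasing_by exact hpar _ h

noncomputable def bfsChainN (v₀ : N) (d : N → ℕ) (par : N → N)
    (hpar : ∀ v, v ≠ v₀ → d (par v) < d v) : N → List N := fun v =>
  if h : v = v₀ then [v₀] else v :: bfsChainN v₀ d par hpar (par v)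
termination_by v => d v
decreasing_by exact hpar _ h

noncomputable def bfsChainE (v₀ : N) (d : N → ℕ) (par : N → N) (pe : N → E')
    (hpar : ∀ v, v ≠ v₀ → d (par v) < d v) : N → List E' := fun v =>
  if h : v = v₀ then [] else pe v :: bfsChainE v₀ d par pe hpar (par v)
termination_by v => d v
decreasing_by exact hpar _ h

theorem bfsZ_base {v₀ : N} {d par hpar} (step : N → Γ) :
    bfsZ v₀ d par hpar step v₀ = 1 := by
  rw [bfsZ]
  simp

theorem bfsZ_step {v₀ : N} {d par hpar} (step : N → Γ) {v : N} (h : v ≠ v₀) :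
    bfsZ v₀ d par hpar step v = (step v)⁻¹ * bfsZ v₀ d par hpar step (par v) := by
  conv_lhs => rw [bfsZ]
  simp [h]

theorem bfsChainN_base {v₀ : N} {d par hpar} :
    bfsChainN v₀ d par hpar v₀ = [v₀] := by
  rw [bfsChainN]; simp

theorem bfsChainN_step {v₀ : N} {d par hpar} {v : N} (h : v ≠ v₀) :
    bfsChainN v₀ d par hpar v = v :: bfsChainN v₀ d par hpar (par v) := by
  conv_lhs => rw [bfsChainN]
  simp [h]

theorem bfsChainE_base {v₀ : N} {d par} {pe : N → E'} {hpar} :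
    bfsChainE v₀ d par pe hpar v₀ = [] := by
  rw [bfsChainE]; simp

theorem bfsChainE_step {v₀ : N} {d par} {pe : N → E'} {hpar} {v : N} (h : v ≠ v₀) :
    bfsChainE v₀ d par pe hpar v = pe v :: bfsChainE v₀ d par pe hpar (par v) := by
  conv_lhs => rw [bfsChainE]
  simp [h]

theorem bfsChain_spec {Δ : MGraph N E'} {v₀ : N} {d : N → ℕ} {par : N → N}
    {pe : N → E'} {hpar : ∀ v, v ≠ v₀ → d (par v) < d v}
    (hpe : ∀ v, v ≠ v₀ → Δ.ends (pe v) = {par v, v}) (v : N) :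
    Δ.GW (bfsChainE v₀ d par pe hpar v) (bfsChainN v₀ d par hpar v) ∧
    (bfsChainN v₀ d par hpar v).head? = some v ∧
    (bfsChainN v₀ d par hpar v).getLast? = some v₀ ∧
    (bfsChainN v₀ d par hpar v).Nodup ∧
    (∀ x ∈ bfsChainN v₀ d par hpar v, d x ≤ d v) ∧
    (∀ g ∈ bfsChainE v₀ d par pe hpar v, ∃ w, w ≠ v₀ ∧ g = pe w) := by
  obtain ⟨n, hn⟩ : ∃ n, d v = n := ⟨_, rfl⟩
  induction n using Nat.strong_induction_on generalizing v with
  | _ n IH =>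
  by_cases hv : v = v₀
  · subst hv
    rw [bfsChainN_base, bfsChainE_base]
    exact ⟨⟨v, rfl⟩, rfl, rfl, by simp, by simp, by simp⟩
  · have hlt : d (par v) < d v := hpar v hv
    obtain ⟨hgw, hhd, hlast, hnd, hdle, hmem⟩ :=
      IH (d (par v)) (hn ▸ hlt) (par v) rfl
    rw [bfsChainN_step hv, bfsChainE_step hv]
    have hne_pv : v ≠ par v := by
      intro hh
      rw [← hh] at hlt
      omega
    have hCne : bfsChainN v₀ d par hpar (par v) ≠ [] := by
      intro hh
      rw [hh] at hhd
      simp at hhd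
    obtain ⟨rest, hrest⟩ : ∃ rest, bfsChainN v₀ d par hpar (par v) = par v :: rest := by
      cases hC : bfsChainN v₀ d par hpar (par v) with
      | nil => exact absurd hC hCne
      | cons x t =>
          rw [hC] at hhd
          simp only [List.head?_cons, Option.some.injEq] at hhd
          exact ⟨t, by rw [hhd]⟩
    refine ⟨?_, rfl, ?_, ?_, ?_, ?_⟩
    · rw [hrest]
      refine ⟨v, par v, rest, rfl, hne_pv, ?_, by rw [← hrest]; exact hgw⟩
      rw [hpe v hv]
      exact Finset.pair_comm (par v) v
    · rw [list_getLast?_cons_of_ne_nil hCne]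
      exact hlast
    · rw [List.nodup_cons]
      refine ⟨?_, hnd⟩
      intro hmemv
      have := hdle v hmemv
      omega
    · intro x hx
      rcases List.mem_cons.mp hx with rfl | hx'
      · exact le_refl _
      · exact le_of_lt (lt_of_le_of_lt (hdle x hx') hlt)
    · intro g hg
      rcases List.mem_cons.mp hg with rfl | hg'
      · exact ⟨v, hv, rfl⟩
      · exact hmem g hg'

end BFS
/-! ### Construction of the switching function -/

theorem list_head?_append_ne_nil {α : Type*} {l : List α} (h : l ≠ []) (l' : List α) :
    (l ++ l').head? = l.head? := by
  cases l with
  | nil => exact absurd rfl h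
  | cons x t => simp

theorem list_mem_of_getLast? {α : Type*} {l : List α} {a : α}
    (h : l.getLast? = some a) : a ∈ l := by
  cases l with
  | nil => simp at h
  | cons x t =>
      have hne : x :: t ≠ [] := by simp
      rw [List.getLast?_eq_getLast hne] at h
      rw [← Option.some.inj h]
      exact List.getLast_mem hne

section Zeta

variable {N E E' Γ : Type*} [Group Γ] {Δ : MGraph N E'} {Φ : GainGraph N E Γ}
  {p : E → E'} {ζ : N → Γ}

theorem lift_ones (hpends : ∀ e, Φ.ends e = Δ.ends (p e)) :
    ∀ {es : List E'} {xs : List N}, Δ.GW es xs →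
      (∀ g ∈ es, ∀ a b : N, Δ.ends g = {a, b} → a ≠ b →
        ∃ e, p e = g ∧ Φ.sg ζ e a b = 1) →
      ∃ LS : List E, List.Forall₂ (fun e g => p e = g) LS es ∧
        SHold (fun e a b => Φ.sg ζ e a b = 1) LS xs ∧
        Φ.toMGraph.GW LS xs := by
  intro es
  induction es with
  | nil =>
      intro xs h _
      exact ⟨[], List.Forall₂.nil, trivial, h⟩
  | cons g es ih =>
      intro xs h hex
      obtain ⟨u, w, xs', rfl, hne, hends, h'⟩ := h
      obtain ⟨LS, hf, hsh, hgw⟩ := ih h' (fun g' hg' => hex g' (List.mem_cons_of_mem _ hg'))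
      obtain ⟨e, hep, hesg⟩ := hex g (List.mem_cons_self) u w hends hne
      exact ⟨e :: LS, List.Forall₂.cons hep hf,
        ⟨u, w, xs', rfl, hesg, hsh⟩,
        ⟨u, w, xs', rfl, hne, by rw [hpends, hep]; exact hends, hgw⟩⟩

/-- Stage 1–2: there is a switching function that puts `1` in every fiber. -/
theorem exists_zeta
    (hsimple : Δ.IsSimple) (hinsep : Δ.IsInseparable)
    (horder : ∃ u v w : N, u ≠ v ∧ u ≠ w ∧ v ≠ w)
    (hexp : IsBiasedExpansion Φ.toMGraph {C | Φ.BalancedCircle C} Δ p) :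
    ∃ ζ : N → Γ, ∀ f : E', ∀ a b : N, Δ.ends f = {a, b} → a ≠ b →
      ∃ e, p e = f ∧ Φ.sg ζ e a b = 1 := by
  classical
  obtain ⟨v₀, v1, w1, hd1, hd2, hd3⟩ := horder
  have hconn := hinsep.1
  have hpends := hexp.2.1
  have hsurj := hexp.1
  -- distance to the base node
  have hPex : ∀ v : N, ∃ n : ℕ, ∃ es xs, Δ.GW es xs ∧ xs.head? = some v₀ ∧
      xs.getLast? = some v ∧ es.length = n := by
    intro v
    obtain ⟨es, xs, hw, hh, hl⟩ := MGraph.conn_walk hsimple (hconn v₀ v)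
    exact ⟨es.length, es, xs, hw, hh, hl, rfl⟩
  set d : N → ℕ := fun v => Nat.find (hPex v) with hd
  have hd_spec : ∀ v, ∃ es xs, Δ.GW es xs ∧ xs.head? = some v₀ ∧
      xs.getLast? = some v ∧ es.length = d v := fun v => Nat.find_spec (hPex v)
  have hd0 : ∀ v, v ≠ v₀ → 0 < d v := by
    intro v hv
    rcases Nat.eq_zero_or_pos (d v) with h | h
    swap
    · exact h
    · exfalso
      obtain ⟨es, xs, hw, hh, hl, hlen⟩ := hd_spec v
      rw [h] at hlen
      have hes : es = [] := List.length_eq_zero_iff.mp hlen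
      subst hes
      obtain ⟨y, rfl⟩ := hw
      simp only [List.head?_cons, Option.some.injEq] at hh
      simp only [List.getLast?_singleton, Option.some.injEq] at hl
      exact hv (hl.symm.trans hh)
  -- parents
  have hparex : ∀ v, v ≠ v₀ → ∃ q : N × E', Δ.ends q.2 = {q.1, v} ∧ d q.1 < d v := by
    intro v hv
    obtain ⟨es, xs, hw, hh, hl, hlen⟩ := hd_spec v
    have hesne : es ≠ [] := by
      intro hh'
      rw [hh'] at hlen
      have := hd0 v hv
      simp at hlen
      omega
    have hrevne : es.reverse ≠ [] := by simpa using hesne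
    obtain ⟨e, res, hrev⟩ := List.exists_cons_of_ne_nil hrevne
    have hrw := MGraph.gw_reverse hw
    rw [hrev] at hrw
    obtain ⟨u', w', xs'', hx, hne', hends', hrest⟩ := hrw
    have hu' : u' = v := by
      have h1 : xs.reverse.head? = some v := by
        rw [List.head?_reverse]
        exact hl
      rw [hx] at h1
      simpa using h1
    have hxs : xs = (w' :: xs'').reverse ++ [u'] := by
      have := congrArg List.reverse hx
      simpa using this
    have hysne : (w' :: xs'').reverse ≠ [] := by simp
    have hyhead : (w' :: xs'').reverse.head? = some v₀ := by
      rw [hxs, list_head?_append_ne_nil hysne] at hh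
      exact hh
    have hylast : (w' :: xs'').reverse.getLast? = some w' := by
      rw [List.getLast?_reverse]
      rfl
    have hdw' : d w' < d v := by
      have hle : d w' ≤ res.length :=
        Nat.find_min' (hPex w') ⟨res.reverse, (w' :: xs'').reverse,
          MGraph.gw_reverse hrest, hyhead, hylast, by simp⟩
      have hlenres : es.length = res.length + 1 := by
        have := congrArg List.length hrev
        simpa using this
      omega
    refine ⟨(w', e), ?_, hdw'⟩
    rw [hends', hu']
    exact Finset.pair_comm v w'
  -- a junk edge
  have hjunk : ∃ g : E', True := by
    obtain ⟨es, xs, hw, hh, hl, hlen⟩ := hd_spec v1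
    cases es with
    | nil =>
        exfalso
        obtain ⟨y, rfl⟩ := hw
        simp only [List.head?_cons, Option.some.injEq] at hh
        simp only [List.getLast?_singleton, Option.some.injEq] at hl
        exact hd1 (hh.symm.trans hl)
    | cons g _ => exact ⟨g, trivial⟩
  obtain ⟨gjunk, -⟩ := hjunk
  set par : N → N := fun v => if h : v = v₀ then v₀ else ((hparex v h).choose).1
    with hpardef
  set pe : N → E' := fun v => if h : v = v₀ then gjunk else ((hparex v h).choose).2
    with hpedef
  have hpar : ∀ v, v ≠ v₀ → d (par v) < d v := by
    intro v hv
    simp only [hpardef, dif_neg hv]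
    exact (hparex v hv).choose_spec.2
  have hpe : ∀ v, v ≠ v₀ → Δ.ends (pe v) = {par v, v} := by
    intro v hv
    simp only [hpardef, hpedef, dif_neg hv]
    exact (hparex v hv).choose_spec.1
  set eh : N → E := fun v => (hsurj (pe v)).choose with hehdef
  have heh : ∀ v, p (eh v) = pe v := fun v => (hsurj (pe v)).choose_spec
  set step : N → Γ := fun v => Φ.ogain (eh v) (par v) v with hstepdef
  set Z : N → Γ := bfsZ v₀ d par hpar step with hZ
  refine ⟨Z, ?_⟩
  have hZtree : ∀ v, v ≠ v₀ → Φ.sg Z (eh v) (par v) v = 1 := by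
    intro v hv
    unfold GainGraph.sg
    rw [hZ, bfsZ_step step hv]
    show (bfsZ v₀ d par hpar step (par v))⁻¹ * step v *
      ((step v)⁻¹ * bfsZ v₀ d par hpar step (par v)) = 1
    group
  have hparne : ∀ v, v ≠ v₀ → par v ≠ v := by
    intro v hv hh
    have := hpar v hv
    rw [hh] at this
    omega
  have hsg1_tree : ∀ w, w ≠ v₀ → ∀ a b : N, Δ.ends (pe w) = {a, b} → a ≠ b →
      ∃ e, p e = pe w ∧ Φ.sg Z e a b = 1 := by
    intro w hw a b hends hab
    have hpw := hpe w hw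
    have hpair : ({par w, w} : Finset N) = {a, b} := by rw [← hpw, hends]
    have hendsZ : Φ.ends (eh w) = {par w, w} := by rw [hpends, heh, hpw]
    rcases finset_pair_eq hab hpair with ⟨h1, h2⟩ | ⟨h1, h2⟩
    · exact ⟨eh w, heh w, by rw [← h1, ← h2]; exact hZtree w hw⟩
    · refine ⟨eh w, heh w, ?_⟩
      rw [← h2, ← h1]
      rw [Φ.sg_inv (hparne w hw) hendsZ, hZtree w hw]
      simp
  -- main normalization
  intro f a b hends hab
  by_cases htree : ∃ w, w ≠ v₀ ∧ f = pe w
  · obtain ⟨w, hwv, rfl⟩ := htree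
    exact hsg1_tree w hwv a b hends hab
  · -- fundamental circle through f
    obtain ⟨hgwa, hheada, hlasta, hnda, -, hmema⟩ := bfsChain_spec (Δ := Δ) hpe a
    obtain ⟨hgwb, hheadb, hlastb, hndb, -, hmemb⟩ := bfsChain_spec (Δ := Δ) hpe b
    set CA := bfsChainN v₀ d par hpar a with hCA
    set CB := bfsChainN v₀ d par hpar b with hCB
    set CEa := bfsChainE v₀ d par pe hpar a with hCEa
    set CEb := bfsChainE v₀ d par pe hpar b with hCEb
    have hv₀A : v₀ ∈ CA := list_mem_of_getLast? hlasta
    have hv₀B : v₀ ∈ CB := list_mem_of_getLast? hlastb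
    obtain ⟨A₁, c, A₂, hAsplit, hcB, hA₁⟩ :=
      list_first_inter (A := CA) (P := fun x => x ∈ CB) ⟨v₀, hv₀A, hv₀B⟩
    obtain ⟨B₁, B₂, hBsplit⟩ := List.append_of_mem hcB
    rw [hAsplit] at hgwa
    obtain ⟨ea₁, ea₂, hCEasplit, hwa1, -⟩ := MGraph.gw_split hgwa
    rw [hBsplit] at hgwb
    obtain ⟨eb₁, eb₂, hCEbsplit, hwb1, -⟩ := MGraph.gw_split hgwb
    have hwb1r : Δ.GW eb₁.reverse (c :: B₁.reverse) := by
      have := MGraph.gw_reverse hwb1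
      rwa [show (B₁ ++ [c]).reverse = c :: B₁.reverse by simp] at this
    set pathE : List E' := ea₁ ++ eb₁.reverse with hpathE
    set pathN : List N := A₁ ++ c :: B₁.reverse with hpathN
    have hpw : Δ.GW pathE pathN := MGraph.gw_append hwa1 hwb1r
    have hpn_head : pathN.head? = some a := by
      rw [hpathN, MGraph.list_head?_append_cons A₁ c B₁.reverse A₂, ← hAsplit]
      exact hheada
    have hpn_last : pathN.getLast? = some b := by
      rw [hpathN, MGraph.list_getLast?_append_cons A₁ c B₁.reverse,
        show (c :: B₁.reverse) = (B₁ ++ [c]).reverse by simp,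
        List.getLast?_reverse, MGraph.list_head?_append_cons B₁ c [] B₂, ← hBsplit]
      exact hheadb
    have hnda' := hAsplit ▸ hnda
    have hndb' := hBsplit ▸ hndb
    have hpn_nodup : pathN.Nodup := by
      rw [hpathN, List.nodup_append]
      obtain ⟨hA1n, hcA2n, hdisjA⟩ := List.nodup_append.mp hnda'
      obtain ⟨hB1n, hcB2n, hdisjB⟩ := List.nodup_append.mp hndb'
      refine ⟨hA1n, ?_, ?_⟩
      · rw [List.nodup_cons]
        refine ⟨?_, List.nodup_reverse.mpr hB1n⟩
        intro hcB1
        exact hdisjB c (List.mem_reverse.mp hcB1) c List.mem_cons_self rfl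
      · intro y hyA₁ y' hyc hyy
        subst hyy
        apply hA₁ y hyA₁
        rcases List.mem_cons.mp hyc with rfl | hyB1
        · exact hcB
        · rw [hBsplit]
          exact List.mem_append.mpr (Or.inl (List.mem_reverse.mp hyB1))
    have hpE_tree : ∀ g ∈ pathE, ∃ w, w ≠ v₀ ∧ g = pe w := by
      intro g hg
      rcases List.mem_append.mp hg with hg1 | hg1
      · exact hmema g (by rw [hCEasplit]; exact List.mem_append.mpr (Or.inl hg1))
      · exact hmemb g (by
          rw [hCEbsplit]
          exact List.mem_append.mpr (Or.inl (List.mem_reverse.mp hg1)))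
    have hfnotpath : f ∉ pathE := by
      intro hf
      exact htree (hpE_tree f hf)
    have hpE_nodup : pathE.Nodup := MGraph.gw_edges_nodup hpw hpn_nodup
    -- set up the circle for the engine
    have hpnne : pathN ≠ [] := by simp [hpathN]
    have hpn_split : pathN.dropLast ++ [b] = pathN := by
      conv_rhs => rw [← List.dropLast_append_getLast hpnne]
      congr 1
      rw [List.getLast?_eq_getLast hpnne] at hpn_last
      rw [Option.some.inj hpn_last]
    have hba : b ≠ a := Ne.symm hab
    have hwf : Δ.GW [f] [b, a] :=
      ⟨b, a, [], rfl, hba, by rw [hends]; exact Finset.pair_comm a b, ⟨a, rfl⟩⟩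
    have hw_star : Δ.GW (pathE ++ f :: []) (pathN.dropLast ++ b :: a :: []) := by
      have := MGraph.gw_append (es₂ := [f]) (xs₂ := [a]) (m := b)
        (by rw [hpn_split]; exact hpw) hwf
      exact this
    have hcxs_eq : pathN.dropLast ++ b :: a :: [] = pathN ++ [a] := by
      rw [← hpn_split]
      simp
    have hlen1 : (pathE).length = pathN.dropLast.length := by
      have := MGraph.gw_length hpw
      rw [List.length_dropLast]
      omega
    have hh_star : (pathN.dropLast ++ b :: a :: []).head? = some a := by
      rw [hcxs_eq, list_head?_append_ne_nil hpnne]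
      exact hpn_head
    have hl_star : (pathN.dropLast ++ b :: a :: []).getLast? = some a := by
      rw [MGraph.list_getLast?_append_cons]
      simp
    have hnd_star : (pathN.dropLast ++ b :: a :: []).dropLast.Nodup := by
      rw [hcxs_eq, List.dropLast_concat]
      exact hpn_nodup
    have hend_star : (pathE ++ f :: []).Nodup := by
      rw [List.nodup_append]
      refine ⟨hpE_nodup, by simp, ?_⟩
      intro y hy y' hy' hyy
      subst hyy
      rcases List.mem_cons.mp hy' with rfl | hy''
      · exact hfnotpath hy
      · simp at hy''
    obtain ⟨LS₁, hLf, hLsh, -⟩ := lift_ones (ζ := Z) hpends hpw (by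
      intro g hg aa bb hends' hne'
      obtain ⟨w, hwv, rfl⟩ := hpE_tree g hg
      exact hsg1_tree w hwv aa bb hends' hne')
    obtain ⟨t, ⟨htp, htval⟩, -⟩ := star (ζ := Z) hexp hw_star hlen1 hh_star hl_star
      hnd_star hend_star hLf List.Forall₂.nil
    have hsp1 : sprod (Φ.sg Z) LS₁ (pathN.dropLast ++ [b]) = 1 := by
      rw [hpn_split]
      exact sprod_ones hLsh
    rw [hsp1, sprod_nil] at htval
    have htends : Φ.ends t = {b, a} := by
      rw [hpends, htp, hends]
      exact Finset.pair_comm a b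
    refine ⟨t, htp, ?_⟩
    rw [Φ.sg_inv hba htends, htval]
    simp
end Zeta
/-! ### The pair lemma: group structure on fibers -/

section PairS

variable {N E E' Γ : Type*} [Group Γ] {Δ : MGraph N E'} {Φ : GainGraph N E Γ}
  {p : E → E'} {ζ : N → Γ}

theorem pairS
    (hsimple : Δ.IsSimple) (hinsep : Δ.IsInseparable)
    (horder : ∃ u v w : N, u ≠ v ∧ u ≠ w ∧ v ≠ w)
    (hexp : IsBiasedExpansion Φ.toMGraph {C | Φ.BalancedCircle C} Δ p)
    (hS1 : ∀ f : E', ∀ a b : N, Δ.ends f = {a, b} → a ≠ b →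
      ∃ e, p e = f ∧ Φ.sg ζ e a b = 1)
    {f g : E'} {x u w : N} (hf : Δ.ends f = {x, u}) (hg : Δ.ends g = {x, w})
    (hxu : x ≠ u) (hxw : x ≠ w) (huw : u ≠ w) :
    (∀ e, p e = f → ∃ e', p e' = g ∧ Φ.sg ζ e' w x = (Φ.sg ζ e x u)⁻¹) ∧
    (∀ e', p e' = g → ∃ e, p e = f ∧ Φ.sg ζ e x u = (Φ.sg ζ e' w x)⁻¹) ∧
    (∀ e₁ e₂, p e₁ = f → p e₂ = f → ∃ e₃, p e₃ = f ∧
        Φ.sg ζ e₃ x u = Φ.sg ζ e₁ x u * Φ.sg ζ e₂ x u) ∧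
    (∀ e₁, p e₁ = f → ∃ e₂, p e₂ = f ∧ Φ.sg ζ e₂ x u = (Φ.sg ζ e₁ x u)⁻¹) ∧
    (∀ e₁ e₂, p e₁ = f → p e₂ = f → Φ.sg ζ e₁ x u = Φ.sg ζ e₂ x u → e₁ = e₂) := by
  classical
  have hpends := hexp.2.1
  have hg' : Δ.ends g = {w, x} := by rw [hg]; exact Finset.pair_comm x w
  obtain ⟨pes, pxs, hwk, hph, hpl, hxnot, hpnd⟩ :=
    MGraph.nocut hsimple hinsep horder (Ne.symm hxu) (Ne.symm hxw)
  obtain ⟨pt, hpxs⟩ : ∃ pt, pxs = u :: pt := by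
    cases pxs with
    | nil => simp at hph
    | cons y t =>
        simp only [List.head?_cons, Option.some.injEq] at hph
        exact ⟨t, by rw [hph]⟩
  have hpxsne : pxs ≠ [] := by rw [hpxs]; simp
  have hpdL : pxs.dropLast ++ [w] = pxs := by
    conv_rhs => rw [← List.dropLast_append_getLast hpxsne]
    congr 1
    rw [List.getLast?_eq_getLast hpxsne] at hpl
    rw [Option.some.inj hpl]
  obtain ⟨m₁, pes', hpes⟩ : ∃ m₁ pes', pes = m₁ :: pes' := by
    cases hpes0 : pes with
    | nil =>
        exfalso
        rw [hpes0] at hwk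
        obtain ⟨y, hy⟩ := hwk
        rw [hpxs] at hy
        simp only [List.cons.injEq] at hy
        obtain ⟨rfl, hy2⟩ := hy
        rw [hpxs, hy2] at hpl
        simp only [List.getLast?_singleton, Option.some.injEq] at hpl
        exact huw hpl
    | cons m₁ pes' => exact ⟨m₁, pes', rfl⟩
  subst hpes
  rw [hpxs] at hwk
  obtain ⟨u2, y₁, pt', hsh, huy₁, hm₁ends, hwk'⟩ := hwk
  have hptsh : pt = y₁ :: pt' := by
    simp only [List.cons.injEq] at hsh
    exact hsh.2
  have hu2 : u2 = u := by
    simp only [List.cons.injEq] at hsh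
    exact hsh.1.symm
  rw [hu2] at huy₁ hm₁ends
  subst hptsh
  -- from here on: pxs = u :: y₁ :: pt'
  have hwk_full : Δ.GW (m₁ :: pes') pxs := by
    rw [hpxs]
    exact ⟨u, y₁, pt', rfl, huy₁, hm₁ends, hwk'⟩
  have hptne : (y₁ :: pt') ≠ [] := by simp
  have hptdL : (y₁ :: pt').dropLast ++ [w] = y₁ :: pt' := by
    conv_rhs => rw [← List.dropLast_append_getLast hptne]
    congr 1
    have h0 : pxs.getLast? = (y₁ :: pt').getLast? := by
      rw [hpxs, list_getLast?_cons_of_ne_nil hptne]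
    rw [h0, List.getLast?_eq_getLast hptne] at hpl
    rw [Option.some.inj hpl]
  have hxpxs : x ∉ pxs := hxnot
  -- the canonical circle
  have hcw : Δ.GW (f :: ((m₁ :: pes') ++ [g])) (x :: u :: y₁ :: (pt' ++ [x])) := by
    refine ⟨x, u, y₁ :: (pt' ++ [x]), rfl, hxu, hf, ?_⟩
    have h2 : Δ.GW [g] [w, x] := ⟨w, x, [], rfl, Ne.symm hxw, hg', ⟨x, rfl⟩⟩
    have h1 : Δ.GW (m₁ :: pes') (pxs.dropLast ++ [w]) := by
      rw [hpdL]
      exact hwk_full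
    have h3 := MGraph.gw_append h1 h2
    have heq : pxs.dropLast ++ w :: [x] = u :: y₁ :: (pt' ++ [x]) := by
      rw [show pxs.dropLast ++ w :: [x] = (pxs.dropLast ++ [w]) ++ [x] by simp,
        hpdL, hpxs]
      rfl
    rwa [heq] at h3
  have hces_nodup : (f :: ((m₁ :: pes') ++ [g])).Nodup := by
    have hpes_sub : ∀ q ∈ (m₁ :: pes'), ∀ y ∈ Δ.ends q, y ∈ pxs :=
      fun q hq y hy => MGraph.gw_ends_subset hwk_full hq y hy
    have hfno : f ∉ (m₁ :: pes') := by
      intro hmem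
      exact hxpxs (hpes_sub f hmem x (by rw [hf]; simp))
    have hgno : g ∉ (m₁ :: pes') := by
      intro hmem
      exact hxpxs (hpes_sub g hmem x (by rw [hg]; simp))
    have hfg : f ≠ g := by
      intro hh
      rw [hh, hg] at hf
      have : u ∈ ({x, w} : Finset N) := by rw [hf]; simp
      simp only [Finset.mem_insert, Finset.mem_singleton] at this
      rcases this with h1 | h1
      · exact hxu h1.symm
      · exact huw h1
    have hpesnd : (m₁ :: pes').Nodup := MGraph.gw_edges_nodup hwk_full hpnd
    rw [List.nodup_cons, List.nodup_append]
    refine ⟨?_, hpesnd, by simp, ?_⟩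
    · intro hmem
      rcases List.mem_append.mp hmem with h1 | h1
      · exact hfno h1
      · simp only [List.mem_singleton] at h1
        exact hfg h1
    · intro y hy y' hy' hyy
      subst hyy
      simp only [List.mem_singleton] at hy'
      subst hy'
      exact hgno hy
  have hch : (x :: u :: y₁ :: (pt' ++ [x])).head? = some x := rfl
  have hcl : (x :: u :: y₁ :: (pt' ++ [x])).getLast? = some x := by
    rw [list_getLast?_cons_of_ne_nil (by simp), list_getLast?_cons_of_ne_nil (by simp),
      list_getLast?_cons_of_ne_nil (by simp), MGraph.list_getLast?_append_cons pt' x []]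
    rfl
  have hcnd : (x :: u :: y₁ :: (pt' ++ [x])).dropLast.Nodup := by
    have heq : x :: u :: y₁ :: (pt' ++ [x]) = (x :: u :: y₁ :: pt') ++ [x] := by simp
    rw [heq, List.dropLast_concat, List.nodup_cons, ← hpxs]
    exact ⟨hxpxs, hpnd⟩
  -- ones lifts
  obtain ⟨LO, hLOf, hLOsh, -⟩ := lift_ones hpends hwk_full
    (fun q _ a b h1 h2 => hS1 q a b h1 h2)
  obtain ⟨LO', hLO'f, hLO'sh, -⟩ := lift_ones hpends hwk'
    (fun q _ a b h1 h2 => hS1 q a b h1 h2)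
  have hLOones : sprod (Φ.sg ζ) LO pxs = 1 := by
    rw [hpxs]; rw [hpxs] at hLOsh; exact sprod_ones hLOsh
  have hLO'ones : sprod (Φ.sg ζ) LO' (y₁ :: pt') = 1 := sprod_ones hLO'sh
  have hLOlen : LO.length = (x :: pxs.dropLast).length - 1 := by
    have h1 := congrArg List.length (forall2_map hLOf)
    simp only [List.length_map, List.length_cons] at h1
    have h2 := MGraph.gw_length hwk_full
    simp only [List.length_cons] at h2
    have h3 : pxs.dropLast.length = pxs.length - 1 := List.length_dropLast
    simp only [List.length_cons]
    omega
  have hLO'len : LO'.length = (y₁ :: pt').dropLast.length := by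
    have h1 := congrArg List.length (forall2_map hLO'f)
    simp only [List.length_map] at h1
    have h2 := MGraph.gw_length hwk'
    simp only [List.length_cons] at h2
    simp only [List.length_dropLast, List.length_cons]
    omega
  -- basic witnesses
  obtain ⟨w1g, hw1gp, hw1gv⟩ := hS1 g w x hg' (Ne.symm hxw).symm.symm
  obtain ⟨w1f, hw1fp, hw1fv⟩ := hS1 f x u hf hxu
  -- product evaluations
  have hmidprod : ∀ eg : E, sprod (Φ.sg ζ) (LO' ++ [eg]) (y₁ :: (pt' ++ [x]))
      = Φ.sg ζ eg w x := by
    intro eg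
    have heq : y₁ :: (pt' ++ [x]) = (y₁ :: pt').dropLast ++ w :: [x] := by
      rw [show (y₁ :: pt').dropLast ++ w :: [x]
          = ((y₁ :: pt').dropLast ++ [w]) ++ [x] by simp, hptdL]
      rfl
    rw [heq, sprod_append hLO'len, hptdL, hLO'ones, one_mul, sprod_cons, sprod_nil,
      mul_one]
  have hfullprod : ∀ eg : E, sprod (Φ.sg ζ) (LO ++ [eg]) (u :: y₁ :: (pt' ++ [x]))
      = Φ.sg ζ eg w x := by
    intro eg
    have heq : u :: y₁ :: (pt' ++ [x]) = pxs.dropLast ++ w :: [x] := by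
      rw [show pxs.dropLast ++ w :: [x] = (pxs.dropLast ++ [w]) ++ [x] by simp,
        hpdL, hpxs]
      rfl
    rw [heq, sprod_append (by simpa using hLOlen), hpdL, hLOones, one_mul, sprod_cons,
      sprod_nil, mul_one]
  have hR2prod : ∀ ef : E, sprod (Φ.sg ζ) (ef :: LO) ((x :: pxs.dropLast) ++ [w])
      = Φ.sg ζ ef x u := by
    intro ef
    have heq : (x :: pxs.dropLast) ++ [w] = x :: u :: (y₁ :: pt') := by
      rw [show (x :: pxs.dropLast) ++ [w] = x :: (pxs.dropLast ++ [w]) by simp,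
        hpdL, hpxs]
    rw [heq, sprod_cons, show (u :: y₁ :: pt') = pxs by rw [hpxs], hLOones, mul_one]
  -- STAR INSTANTIATIONS
  -- (I): solve over f, with arbitrary lift over g and ones in the middle
  have starI : ∀ eg : E, p eg = g → ∃! t : E, p t = f ∧
      Φ.sg ζ t x u = (Φ.sg ζ eg w x)⁻¹ := by
    intro eg hegp
    have h₂ : List.Forall₂ (fun e q => p e = q) (LO ++ [eg]) ((m₁ :: pes') ++ [g]) :=
      list_forall₂_append hLOf (List.Forall₂.cons hegp List.Forall₂.nil)
    have hstar := star (ζ := ζ) hexp (es₁ := []) (xs₁ := [])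
      (f := f) (a := x) (b := u) (es₂ := (m₁ :: pes') ++ [g])
      (xs₂ := y₁ :: (pt' ++ [x])) (z := x)
      (by simpa using hcw) rfl (by simpa using hch) (by simpa using hcl)
      (by simpa using hcnd) (by simpa using hces_nodup)
      List.Forall₂.nil h₂
    obtain ⟨t, ⟨htp, htv⟩, htu⟩ := hstar
    rw [sprod_nil, hfullprod eg] at htv
    refine ⟨t, ⟨htp, by rw [htv]; group⟩, ?_⟩
    rintro t' ⟨ht'p, ht'v⟩
    apply htu
    refine ⟨ht'p, ?_⟩
    rw [sprod_nil, hfullprod eg, ht'v]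
    group
  -- (II): solve over g, with arbitrary lift over f and ones in the middle
  have starII : ∀ ef : E, p ef = f → ∃! t : E, p t = g ∧
      Φ.sg ζ t w x = (Φ.sg ζ ef x u)⁻¹ := by
    intro ef hefp
    have h₁ : List.Forall₂ (fun e q => p e = q) (ef :: LO) (f :: m₁ :: pes') :=
      List.Forall₂.cons hefp hLOf
    have hxseq : (x :: pxs.dropLast) ++ w :: x :: [] = x :: u :: y₁ :: (pt' ++ [x]) := by
      rw [show (x :: pxs.dropLast) ++ w :: x :: []
          = x :: ((pxs.dropLast ++ [w]) ++ [x]) by simp, hpdL, hpxs]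
      rfl
    have heseq : (f :: m₁ :: pes') ++ g :: [] = f :: ((m₁ :: pes') ++ [g]) := by simp
    have hstar := star (ζ := ζ) hexp (es₁ := f :: m₁ :: pes') (xs₁ := x :: pxs.dropLast)
      (f := g) (a := w) (b := x) (es₂ := []) (xs₂ := []) (z := x)
      (by rw [heseq, hxseq]; exact hcw)
      (by
        have h2 := MGraph.gw_length hwk_full
        simp only [List.length_cons] at h2
        have h3 : pxs.dropLast.length = pxs.length - 1 := List.length_dropLast
        simp only [List.length_cons]
        omega)
      (by rw [hxseq]; exact hch) (by rw [hxseq]; exact hcl)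
      (by rw [hxseq]; exact hcnd) (by rw [heseq]; exact hces_nodup)
      h₁ List.Forall₂.nil
    obtain ⟨t, ⟨htp, htv⟩, htu⟩ := hstar
    rw [sprod_nil, hR2prod ef] at htv
    refine ⟨t, ⟨htp, by rw [htv]; group⟩, ?_⟩
    rintro t' ⟨ht'p, ht'v⟩
    apply htu
    refine ⟨ht'p, ?_⟩
    rw [sprod_nil, hR2prod ef, ht'v]
    group
  -- (III): solve over m₁
  have starIII : ∀ ef eg : E, p ef = f → p eg = g → ∃ t : E, p t = m₁ ∧
      Φ.sg ζ t u y₁ = (Φ.sg ζ ef x u)⁻¹ * (Φ.sg ζ eg w x)⁻¹ := by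
    intro ef eg hefp hegp
    have h₁ : List.Forall₂ (fun e q => p e = q) [ef] [f] :=
      List.Forall₂.cons hefp List.Forall₂.nil
    have h₂ : List.Forall₂ (fun e q => p e = q) (LO' ++ [eg]) (pes' ++ [g]) :=
      list_forall₂_append hLO'f (List.Forall₂.cons hegp List.Forall₂.nil)
    have hstar := star (ζ := ζ) hexp (es₁ := [f]) (xs₁ := [x])
      (f := m₁) (a := u) (b := y₁) (es₂ := pes' ++ [g])
      (xs₂ := pt' ++ [x]) (z := x)
      (by simpa using hcw) rfl (by simpa using hch) (by simpa using hcl)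
      (by simpa using hcnd) (by simpa using hces_nodup) h₁ h₂
    obtain ⟨t, ⟨htp, htv⟩, -⟩ := hstar
    rw [hmidprod eg] at htv
    have hP1 : sprod (Φ.sg ζ) [ef] ([x] ++ [u]) = Φ.sg ζ ef x u := by
      rw [show ([x] ++ [u] : List N) = x :: u :: [] by simp, sprod_cons, sprod_nil,
        mul_one]
    rw [hP1] at htv
    exact ⟨t, htp, htv⟩
  -- (IV): solve over f with lifts over m₁ and g
  have starIV : ∀ em eg : E, p em = m₁ → p eg = g → ∃ t : E, p t = f ∧
      Φ.sg ζ t x u = (Φ.sg ζ em u y₁ * Φ.sg ζ eg w x)⁻¹ := by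
    intro em eg hemp hegp
    have h₂ : List.Forall₂ (fun e q => p e = q) (em :: (LO' ++ [eg]))
        ((m₁ :: pes') ++ [g]) :=
      List.Forall₂.cons hemp (list_forall₂_append hLO'f
        (List.Forall₂.cons hegp List.Forall₂.nil))
    have hstar := star (ζ := ζ) hexp (es₁ := []) (xs₁ := [])
      (f := f) (a := x) (b := u) (es₂ := (m₁ :: pes') ++ [g])
      (xs₂ := y₁ :: (pt' ++ [x])) (z := x)
      (by simpa using hcw) rfl (by simpa using hch) (by simpa using hcl)
      (by simpa using hcnd) (by simpa using hces_nodup)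
      List.Forall₂.nil h₂
    obtain ⟨t, ⟨htp, htv⟩, -⟩ := hstar
    have hP2 : sprod (Φ.sg ζ) (em :: (LO' ++ [eg])) (u :: y₁ :: (pt' ++ [x]))
        = Φ.sg ζ em u y₁ * Φ.sg ζ eg w x := by
      rw [sprod_cons, hmidprod eg]
    rw [sprod_nil, hP2] at htv
    exact ⟨t, htp, by rw [htv]; group⟩
  -- now the five conclusions
  have E1 : ∀ e, p e = f → ∃ e', p e' = g ∧ Φ.sg ζ e' w x = (Φ.sg ζ e x u)⁻¹ := by
    intro e hep
    obtain ⟨t, ⟨htp, htv⟩, -⟩ := starII e hep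
    exact ⟨t, htp, htv⟩
  have E2 : ∀ e', p e' = g → ∃ e, p e = f ∧ Φ.sg ζ e x u = (Φ.sg ζ e' w x)⁻¹ := by
    intro e' hep
    obtain ⟨t, ⟨htp, htv⟩, -⟩ := starI e' hep
    exact ⟨t, htp, htv⟩
  refine ⟨E1, E2, ?_, ?_, ?_⟩
  · -- products
    intro e₁ e₂ he₁ he₂
    obtain ⟨em, hemp, hemv⟩ := starIII e₂ w1g he₂ hw1gp
    obtain ⟨eg, hegp, hegv⟩ := E1 e₁ he₁
    obtain ⟨t, htp, htv⟩ := starIV em eg hemp hegp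
    refine ⟨t, htp, ?_⟩
    rw [htv, hemv, hegv, hw1gv]
    group
  · -- inverses
    intro e₁ he₁
    obtain ⟨eg, hegp, hegv⟩ := E1 e₁ he₁
    obtain ⟨em, hemp, hemv⟩ := starIII w1f eg hw1fp hegp
    obtain ⟨t, htp, htv⟩ := starIV em w1g hemp hw1gp
    refine ⟨t, htp, ?_⟩
    rw [htv, hemv, hegv, hw1fv, hw1gv]
    group
  · -- uniqueness
    intro e₁ e₂ he₁ he₂ hval
    obtain ⟨eg, hegp, hegv⟩ := E1 e₁ he₁
    obtain ⟨t, ⟨htp, htv⟩, htu⟩ := starI eg hegp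
    have h1 : e₁ = t := by
      apply htu
      exact ⟨he₁, by rw [hegv]; group⟩
    have h2 : e₂ = t := by
      apply htu
      exact ⟨he₂, by rw [hegv, ← hval]; group⟩
    rw [h1, h2]

end PairS
/-! ### Final assembly -/

section Assembly

variable {N E E' Γ : Type*} [Group Γ] {Δ : MGraph N E'} {Φ : GainGraph N E Γ}
  {p : E → E'} {ζ : N → Γ}

theorem third_node (horder : ∃ u v w : N, u ≠ v ∧ u ≠ w ∧ v ≠ w) (x aa : N) :
    ∃ t : N, t ≠ x ∧ t ≠ aa := by
  obtain ⟨a1, b1, c1, hab, hac, hbc⟩ := horder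
  by_cases h1 : a1 ≠ x ∧ a1 ≠ aa
  · exact ⟨a1, h1⟩
  by_cases h2 : b1 ≠ x ∧ b1 ≠ aa
  · exact ⟨b1, h2⟩
  by_cases h3 : c1 ≠ x ∧ c1 ≠ aa
  · exact ⟨c1, h3⟩
  exfalso
  have h1' : a1 = x ∨ a1 = aa := by tauto
  have h2' : b1 = x ∨ b1 = aa := by tauto
  have h3' : c1 = x ∨ c1 = aa := by tauto
  rcases h1' with rfl | rfl <;> rcases h2' with rfl | rfl <;>
    rcases h3' with rfl | rfl <;> simp_all

theorem edge_at (hsimple : Δ.IsSimple) (hinsep : Δ.IsInseparable)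
    (horder : ∃ u v w : N, u ≠ v ∧ u ≠ w ∧ v ≠ w) (t : N) :
    ∃ e : E', t ∈ Δ.ends e := by
  obtain ⟨y, hy1, -⟩ := third_node horder t t
  obtain ⟨z, hz⟩ := Relation.ReflTransGen.cases_head (hinsep.1 t y) |>.resolve_left
    (fun hh => hy1 hh.symm)
  obtain ⟨e, -, hte, -⟩ := hz.1
  exact ⟨e, hte⟩

theorem partner (hsimple : Δ.IsSimple) (hinsep : Δ.IsInseparable)
    (horder : ∃ u v w : N, u ≠ v ∧ u ≠ w ∧ v ≠ w)
    {f : E'} {x aa : N} (hf : Δ.ends f = {x, aa}) (hne : x ≠ aa) :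
    ∃ (g : E') (bb : N), Δ.ends g = {x, bb} ∧ x ≠ bb ∧ aa ≠ bb := by
  classical
  have hcompl : (({f} : Set E')ᶜ).Nonempty := by
    by_contra hcc
    rw [Set.not_nonempty_iff_eq_empty, ← Set.compl_univ, compl_inj_iff] at hcc
    have hall : ∀ g : E', g = f := by
      intro g
      have : g ∈ ({f} : Set E') := by rw [hcc]; trivial
      exact this
    obtain ⟨t, htx, htaa⟩ := third_node horder x aa
    obtain ⟨e, hte⟩ := edge_at hsimple hinsep horder t
    rw [hall e, hf] at hte
    simp only [Finset.mem_insert, Finset.mem_singleton] at hte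
    tauto
  obtain ⟨z₁, z₂, hz12, hz1A, hz1B, hz2A, hz2B⟩ := hinsep.2 {f} ({f} : Set E')ᶜ
    ⟨f, rfl⟩ hcompl disjoint_compl_right (Set.union_compl_self _)
  have hnode : ∀ z, z ∈ Δ.nodeSet {f} → z = x ∨ z = aa := by
    rintro z ⟨e, he, hze⟩
    simp only [Set.mem_singleton_iff] at he
    subst he
    rw [hf] at hze
    simpa using hze
  have hx_or : z₁ = x ∨ z₂ = x := by
    rcases hnode z₁ hz1A with h1 | h1 <;> rcases hnode z₂ hz2A with h2 | h2
    · exact Or.inl h1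
    · exact Or.inl h1
    · exact Or.inr h2
    · exact absurd (h1.trans h2.symm) hz12
  have hxB : x ∈ Δ.nodeSet ({f} : Set E')ᶜ := by
    rcases hx_or with h | h
    · exact h ▸ hz1B
    · exact h ▸ hz2B
  obtain ⟨g, hgB, hxg⟩ := hxB
  obtain ⟨c, d, hcd, hgends⟩ := MGraph.simple_ends_two hsimple g
  have hxcd : x = c ∨ x = d := by
    rw [hgends] at hxg
    simpa using hxg
  have hgf : g ≠ f := by
    intro hh
    exact hgB (by rw [hh]; rfl)
  have hmain : ∃ bb, Δ.ends g = {x, bb} ∧ x ≠ bb := by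
    rcases hxcd with rfl | rfl
    · exact ⟨d, hgends, hcd⟩
    · exact ⟨c, by rw [hgends]; exact Finset.pair_comm c x, hcd.symm⟩
  obtain ⟨bb, hgends', hxbb⟩ := hmain
  refine ⟨g, bb, hgends', hxbb, ?_⟩
  intro hh
  subst hh
  rw [← hf] at hgends'
  exact hgf (hsimple.2 hgends')

/-- The final theorem, given a normalized switching function. -/
theorem final_core
    (hsimple : Δ.IsSimple) (hinsep : Δ.IsInseparable)
    (horder : ∃ u v w : N, u ≠ v ∧ u ≠ w ∧ v ≠ w)
    (hexp : IsBiasedExpansion Φ.toMGraph {C | Φ.BalancedCircle C} Δ p)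
    (hS1 : ∀ f : E', ∀ a b : N, Δ.ends f = {a, b} → a ≠ b →
      ∃ e, p e = f ∧ Φ.sg ζ e a b = 1) :
    ∃ (H : Subgroup Γ),
      ∀ f : E', ∀ u v : N, Δ.ends f = ({u, v} : Finset N) → u ≠ v →
        (∀ e : E, p e = f → Φ.sg ζ e u v ∈ H) ∧
        (∀ h ∈ H, ∃! e : E, p e = f ∧ Φ.sg ζ e u v = h) := by
  classical
  have hpends := hexp.2.1
  -- per-edge group properties
  have hprops : ∀ f : E', ∀ x aa : N, Δ.ends f = {x, aa} → x ≠ aa →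
      (∀ e₁ e₂, p e₁ = f → p e₂ = f → ∃ e₃, p e₃ = f ∧
          Φ.sg ζ e₃ x aa = Φ.sg ζ e₁ x aa * Φ.sg ζ e₂ x aa) ∧
      (∀ e₁, p e₁ = f → ∃ e₂, p e₂ = f ∧ Φ.sg ζ e₂ x aa = (Φ.sg ζ e₁ x aa)⁻¹) ∧
      (∀ e₁ e₂, p e₁ = f → p e₂ = f → Φ.sg ζ e₁ x aa = Φ.sg ζ e₂ x aa → e₁ = e₂) := by
    intro f x aa hf hne
    obtain ⟨g, bb, hg, hxbb, haabb⟩ := partner hsimple hinsep horder hf hne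
    obtain ⟨-, -, h3, h4, h5⟩ := pairS hsimple hinsep horder hexp hS1 hf hg hne hxbb haabb
    exact ⟨h3, h4, h5⟩
  -- flip closure
  have hflipset : ∀ f : E', ∀ x aa : N, Δ.ends f = {x, aa} → x ≠ aa → ∀ γ : Γ,
      (∃ e, p e = f ∧ Φ.sg ζ e x aa = γ) ↔ (∃ e, p e = f ∧ Φ.sg ζ e aa x = γ) := by
    have key : ∀ f : E', ∀ x aa : N, Δ.ends f = {x, aa} → x ≠ aa → ∀ γ : Γ,
        (∃ e, p e = f ∧ Φ.sg ζ e x aa = γ) → (∃ e, p e = f ∧ Φ.sg ζ e aa x = γ) := by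
      rintro f x aa hf hne γ ⟨e, hep, hev⟩
      obtain ⟨e₂, he₂p, he₂v⟩ := (hprops f x aa hf hne).2.1 e hep
      refine ⟨e₂, he₂p, ?_⟩
      have hends₂ : Φ.ends e₂ = {x, aa} := by rw [hpends, he₂p, hf]
      rw [Φ.sg_inv hne hends₂, he₂v, hev]
      simp
    intro f x aa hf hne γ
    constructor
    · exact key f x aa hf hne γ
    · exact key f aa x (by rw [hf]; exact Finset.pair_comm x aa) (Ne.symm hne) γ
  -- transfer across a shared node
  have hEQ : ∀ f g : E', ∀ x u w : N, Δ.ends f = {x, u} → Δ.ends g = {x, w} →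
      x ≠ u → x ≠ w → u ≠ w → ∀ γ : Γ,
      (∃ e, p e = f ∧ Φ.sg ζ e x u = γ) ↔ (∃ e, p e = g ∧ Φ.sg ζ e x w = γ) := by
    intro f g x u w hf hg hxu hxw huw γ
    obtain ⟨hE1, hE2, -, -, -⟩ := pairS hsimple hinsep horder hexp hS1 hf hg hxu hxw huw
    have hg' : Δ.ends g = {w, x} := by rw [hg]; exact Finset.pair_comm x w
    constructor
    · rintro ⟨e, hep, hev⟩
      obtain ⟨e', he'p, he'v⟩ := hE1 e hep
      refine ⟨e', he'p, ?_⟩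
      have hends' : Φ.ends e' = {w, x} := by rw [hpends, he'p, hg']
      rw [Φ.sg_inv (Ne.symm hxw) hends', he'v, hev]
      simp
    · rintro ⟨e, hep, hev⟩
      have hends : Φ.ends e = {x, w} := by rw [hpends, hep, hg]
      have hev' : Φ.sg ζ e w x = γ⁻¹ := by rw [Φ.sg_inv hxw hends, hev]
      obtain ⟨e', he'p, he'v⟩ := hE2 e hep
      exact ⟨e', he'p, by rw [he'v, hev']; simp⟩
  -- base edge
  obtain ⟨t0, -, -, -, -, -⟩ := id horder
  obtain ⟨f₀, hf₀t⟩ := edge_at hsimple hinsep horder t0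
  obtain ⟨x₀, y₀, hx₀y₀, hf₀ends⟩ := MGraph.simple_ends_two hsimple f₀
  -- global propagation
  have hQ : ∀ s : N, ∀ f : E', ∀ aa : N, Δ.ends f = {s, aa} → s ≠ aa → ∀ γ : Γ,
      ((∃ e, p e = f ∧ Φ.sg ζ e s aa = γ) ↔ (∃ e, p e = f₀ ∧ Φ.sg ζ e x₀ y₀ = γ)) := by
    intro s
    have hc : Relation.ReflTransGen (Δ.adjIn Set.univ) x₀ s := hinsep.1 x₀ s
    induction hc with
    | refl =>
        intro f aa hf hne γ
        by_cases haa : aa = y₀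
        · subst haa
          have : f = f₀ := hsimple.2 (by rw [hf, hf₀ends])
          subst this
          rfl
        · exact hEQ f f₀ x₀ aa y₀ hf hf₀ends hne hx₀y₀ (fun hh => haa hh) γ
    | tail hab hbc ih =>
        rename_i b c
        intro f aa hf hne γ
        by_cases hbceq : b = c
        · subst hbceq
          exact ih f aa hf hne γ
        · obtain ⟨e₀, -, hbe, hce⟩ := hbc
          have he₀ends : Δ.ends e₀ = {b, c} := MGraph.ends_eq_of_mem_two hsimple hbe hce hbceq
          have he₀c : Δ.ends e₀ = {c, b} := by rw [he₀ends]; exact Finset.pair_comm b c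
          have hbase : ∀ γ' : Γ, (∃ e, p e = e₀ ∧ Φ.sg ζ e c b = γ') ↔
              (∃ e, p e = f₀ ∧ Φ.sg ζ e x₀ y₀ = γ') := by
            intro γ'
            constructor
            · intro h1
              have h2 := (hflipset e₀ c b he₀c (fun hh => hbceq hh.symm) γ').mp h1
              exact (ih e₀ c he₀ends hbceq γ').mp h2
            · intro h1
              have h2 := (ih e₀ c he₀ends hbceq γ').mpr h1
              exact (hflipset e₀ b c he₀ends hbceq γ').mp h2
          by_cases haa : aa = b
          · subst haa
            have : f = e₀ := hsimple.2 (by rw [hf, he₀c])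
            subst this
            exact hbase γ
          · have h3 := hEQ e₀ f c b aa he₀c hf (fun hh => hbceq hh.symm) hne
              (fun hh => haa hh.symm)
            constructor
            · intro h1; exact (hbase γ).mp ((h3 γ).mpr h1)
            · intro h1; exact (h3 γ).mp ((hbase γ).mpr h1)
  -- the subgroup
  have hone : ∃ e, p e = f₀ ∧ Φ.sg ζ e x₀ y₀ = 1 := hS1 f₀ x₀ y₀ hf₀ends hx₀y₀
  refine ⟨{
    carrier := {γ | ∃ e, p e = f₀ ∧ Φ.sg ζ e x₀ y₀ = γ}
    one_mem' := hone
    mul_mem' := by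
      rintro γ δ ⟨e₁, h₁p, h₁v⟩ ⟨e₂, h₂p, h₂v⟩
      obtain ⟨e₃, h₃p, h₃v⟩ := (hprops f₀ x₀ y₀ hf₀ends hx₀y₀).1 e₁ e₂ h₁p h₂p
      exact ⟨e₃, h₃p, by rw [h₃v, h₁v, h₂v]⟩
    inv_mem' := by
      rintro γ ⟨e₁, h₁p, h₁v⟩
      obtain ⟨e₂, h₂p, h₂v⟩ := (hprops f₀ x₀ y₀ hf₀ends hx₀y₀).2.1 e₁ h₁p
      exact ⟨e₂, h₂p, by rw [h₂v, h₁v]⟩ }, ?_⟩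
  intro f u v hends hne
  have hiff := hQ u f v hends hne
  constructor
  · intro e hep
    exact (hiff (Φ.sg ζ e u v)).mp ⟨e, hep, rfl⟩
  · intro h hmem
    obtain ⟨e, hep, hev⟩ := (hiff h).mpr hmem
    refine ⟨e, ⟨hep, hev⟩, ?_⟩
    rintro e' ⟨he'p, he'v⟩
    exact (hprops f u v hends hne).2.2 e' e he'p hep (by rw [he'v, hev])

end Assembly
/-! ## Statement 0 -/

/-- Let `Δ` be an inseparable simple graph of order at least 3.
If the biased graph `⟨Φ⟩` of a gain graph `Φ` with gain group `Γ` is a biased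
expansion of `Δ` (with projection `p`), then there are a subgroup `H ≤ Γ` and a
switching function `ζ : N → Γ` such that the switched gains identify each fiber
`p⁻¹(f)` bijectively with `H`; that is, `⟨Φ⟩ = ⟨H·Δ⟩`, the biased graph of the
group expansion of `Δ` by `H`, and `Φ` is a switching of `H·Δ`. -/
theorem stmt0 {N E E' Γ : Type*} [Group Γ]
    (Δ : MGraph N E') (hsimple : Δ.IsSimple) (hinsep : Δ.IsInseparable)
    (horder : ∃ u v w : N, u ≠ v ∧ u ≠ w ∧ v ≠ w)
    (Φ : GainGraph N E Γ) (p : E → E')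
    (hexp : IsBiasedExpansion Φ.toMGraph {C | Φ.BalancedCircle C} Δ p) :
    ∃ (H : Subgroup Γ) (ζ : N → Γ),
      ∀ f : E', ∀ u v : N, Δ.ends f = ({u, v} : Finset N) → u ≠ v →
        (∀ e : E, p e = f → (ζ u)⁻¹ * Φ.ogain e u v * ζ v ∈ H) ∧
        (∀ h ∈ H, ∃! e : E, p e = f ∧ (ζ u)⁻¹ * Φ.ogain e u v * ζ v = h) := by
  obtain ⟨ζ, hS1⟩ := exists_zeta hsimple hinsep horder hexp
  obtain ⟨H, hH⟩ := final_core hsimple hinsep horder hexp hS1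
  exact ⟨H, ζ, fun f u v h1 h2 => hH f u v h1 h2⟩
end

section
/- Let N̂ be an independent set of points in a projective geometry P and let Ê ⊆ Ê^•(N̂). The closed, balanced edge sets of the frame matroid G(Ω(N̂, Ê)) are exactly the edge sets S whose corresponding point sets Ŝ are the intersections of Ê with cross-flats of P. -/
open scoped Classical

/-!
The argument rests on the exchange property of projective spans, which comes from the
Veblen–Young axiom through the fact that the join of a point and a flat is a flat.

Along a connected set of links, `ν a` and the edge points span `ν b` for every node `b` of the
component of `a`. Exchanging against `ν a`, which lies outside the cross-flat of a balanced
circle, shows that the point of an edge of a balanced circle is spanned by the other edges. An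
induction over the edges of a finite balanced set `S` then shows that `span (Ŝ ∪ ν(Y))` contains
`ν v` only if `S` joins `v` to `Y`. So `span Ŝ` is a cross-flat, and a point of the edge line
`v̂ŵ` lies in it only if `S` joins `v` and `w`.

In the frame matroid, adding an edge `e` to a balanced set `S` keeps the rank exactly when `S`
joins the ends of `e` and `S + e` is still balanced. Hence a closed balanced `S` contains every
edge whose point is in `span Ŝ`. Conversely, for a cross-flat `t` the set `Ehat ∩ t` is balanced
and closed: a new edge that keeps the rank closes a balanced circle with edges in `t`, and so
its point is in `t`.
-/

/-! ### Spans and the exchange property -/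

namespace ProjGeom

variable {P : Type*} (G : ProjGeom P)

lemma subset_span {A : Set P} : A ⊆ G.span A :=
  fun _ hx _ ht => ht.2 hx

lemma span_le {A t : Set P} (ht : G.IsFlat t) (hA : A ⊆ t) : G.span A ⊆ t :=
  Set.sInter_subset_of_mem ⟨ht, hA⟩

lemma isFlat_span (A : Set P) : G.IsFlat (G.span A) :=
  fun _ hp _ hq _ hx t ht => ht.1 _ (hp t ht) _ (hq t ht) hx

lemma span_mono {A B : Set P} (h : A ⊆ B) : G.span A ⊆ G.span B :=
  G.span_le (G.isFlat_span B) (h.trans G.subset_span)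

lemma line_subset_span {A : Set P} {p q : P} (hp : p ∈ G.span A) (hq : q ∈ G.span A) :
    G.line p q ⊆ G.span A :=
  G.isFlat_span A p hp q hq

lemma span_insert_of_mem {A : Set P} {y : P} (h : y ∈ G.span A) :
    G.span (insert y A) = G.span A :=
  (G.span_le (G.isFlat_span A) (Set.insert_subset h G.subset_span)).antisymm
    (G.span_mono (Set.subset_insert _ _))

lemma mem_span_image_finite {ι : Type*} (f : ι → P) {S : Set ι} {x : P}
    (hx : x ∈ G.span (f '' S)) : ∃ S₀ : Finset ι, ↑S₀ ⊆ S ∧ x ∈ G.span (f '' ↑S₀) := by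
  classical
  have hflat : G.IsFlat {x | ∃ S₀ : Finset ι, ↑S₀ ⊆ S ∧ x ∈ G.span (f '' ↑S₀)} := by
    rintro p ⟨S₁, hS₁, hp⟩ q ⟨S₂, hS₂, hq⟩ z hz
    refine ⟨S₁ ∪ S₂, by simp [hS₁, hS₂], G.line_subset_span ?_ ?_ hz⟩
    · exact G.span_mono (Set.image_mono (by simp)) hp
    · exact G.span_mono (Set.image_mono (by simp)) hq
  refine G.span_le hflat ?_ hx
  rintro _ ⟨i, hi, rfl⟩
  exact ⟨{i}, by simpa using hi, G.subset_span ⟨i, by simp, rfl⟩⟩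

lemma line_eq_of_mem {p q x : P} (hx : x ∈ G.line p q) (hxp : x ≠ p) :
    G.line p x = G.line p q := by
  by_cases hpq : p = q
  · subst hpq
    rw [G.line_self] at hx
    exact absurd hx hxp
  · exact G.line_unique p q p x hpq (G.left_mem_line p q) hx (Ne.symm hxp)

lemma mem_line_of_mem_line {p q x : P} (hx : x ∈ G.line p q) (hxp : x ≠ p) :
    q ∈ G.line p x := by
  rw [G.line_eq_of_mem hx hxp]
  exact G.right_mem_line p q

def join (q : P) (F : Set P) : Set P := insert q {x | ∃ a ∈ F, x ∈ G.line q a}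

lemma subset_join (q : P) (F : Set P) : F ⊆ G.join q F :=
  fun a ha => Or.inr ⟨a, ha, G.right_mem_line q a⟩

lemma line_subset_join {q y : P} {F : Set P} (hy : y ∈ G.join q F) :
    G.line q y ⊆ G.join q F := by
  intro z hz
  by_cases hyq : y = q
  · subst hyq
    rw [G.line_self] at hz
    exact Or.inl hz
  rcases hy with rfl | ⟨b, hb, hyb⟩
  · exact absurd rfl hyq
  · exact Or.inr ⟨b, hb, G.line_eq_of_mem hyb hyq ▸ hz⟩

lemma line_subset_join_of_mem {q a y : P} {F : Set P} (hF : G.IsFlat F) (hq : q ∉ F)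
    (ha : a ∈ F) (hy : y ∈ G.join q F) : G.line a y ⊆ G.join q F := by
  intro z hz
  rcases hy with rfl | ⟨b, hb, hyb⟩
  · exact Or.inr ⟨a, ha, G.line_symm a y ▸ hz⟩
  by_cases hyF : y ∈ F
  · exact G.subset_join q F (hF a ha y hyF hz)
  by_cases hza : z = a
  · exact hza ▸ G.subset_join q F ha
  by_cases hzq : z = q
  · exact Or.inl hzq
  have hqb : q ≠ b := fun h => hq (h ▸ hb)
  by_cases hab : a = b
  · subst hab
    have hya : y ≠ a := fun h => hyF (h ▸ ha)
    rw [G.line_eq_of_mem (G.line_symm q a ▸ hyb) hya, G.line_symm] at hz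
    exact Or.inr ⟨a, ha, hz⟩
  have hyza : y ∈ G.line z a := G.line_symm a z ▸ G.mem_line_of_mem_line hz hza
  obtain ⟨w, hwzq, hwab⟩ := G.veblen z a q b y hza hqb hzq hab hyza hyb
  have hwF : w ∈ F := hF a ha b hb hwab
  by_cases hwz : w = z
  · exact hwz ▸ G.subset_join q F hwF
  have hwq : w ≠ q := fun h => hq (h ▸ hwF)
  exact Or.inr ⟨w, hwF, G.mem_line_of_mem_line (G.line_symm z q ▸ hwzq) hwq⟩

lemma isFlat_join {q : P} {F : Set P} (hF : G.IsFlat F) (hq : q ∉ F) :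
    G.IsFlat (G.join q F) := by
  intro x hx y hy z hz
  by_cases hxF : x ∈ F
  · exact G.line_subset_join_of_mem hF hq hxF hy hz
  by_cases hyF : y ∈ F
  · exact G.line_subset_join_of_mem hF hq hyF hx (G.line_symm x y ▸ hz)
  rcases hx with rfl | ⟨a, ha, hxa⟩
  · exact G.line_subset_join hy hz
  rcases hy with hyq | ⟨b, hb, hyb⟩
  · rw [hyq, G.line_symm] at hz
    exact G.line_subset_join (Or.inr ⟨a, ha, hxa⟩) hz
  by_cases hxy : x = y
  · subst hxy
    rw [G.line_self] at hz
    exact hz ▸ Or.inr ⟨a, ha, hxa⟩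
  have hxa' : x ≠ a := fun h => hxF (h ▸ ha)
  have hyb' : y ≠ b := fun h => hyF (h ▸ hb)
  by_cases hab : a = b
  · subst hab
    have hqa : q ≠ a := fun h => hq (h ▸ ha)
    exact Or.inr ⟨a, ha, G.line_unique q a x y hqa hxa hyb hxy ▸ hz⟩
  have hqxa : q ∈ G.line x a :=
    G.line_symm a x ▸ G.mem_line_of_mem_line (G.line_symm q a ▸ hxa) hxa'
  have hqyb : q ∈ G.line y b :=
    G.line_symm b y ▸ G.mem_line_of_mem_line (G.line_symm q b ▸ hyb) hyb'
  obtain ⟨w, hwxy, hwab⟩ := G.veblen x a y b q hxa' hyb' hxy hab hqxa hqyb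
  have hwF : w ∈ F := hF a ha b hb hwab
  have hwx : w ≠ x := fun h => hxF (h ▸ hwF)
  have hzwx : z ∈ G.line w x := G.line_symm x w ▸ G.line_eq_of_mem hwxy hwx ▸ hz
  exact G.line_subset_join_of_mem hF hq hwF (Or.inr ⟨a, ha, hxa⟩) hzwx

lemma span_insert_subset_join {A : Set P} {q : P} (hq : q ∉ G.span A) :
    G.span (insert q A) ⊆ G.join q (G.span A) :=
  G.span_le (G.isFlat_join (G.isFlat_span A) hq)
    (Set.insert_subset (Or.inl rfl) (G.subset_span.trans (G.subset_join q _)))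

lemma exchange {A : Set P} {p q : P} (hp : p ∈ G.span (insert q A)) (hpA : p ∉ G.span A) :
    q ∈ G.span (insert p A) := by
  by_cases hq : q ∈ G.span A
  · exact absurd (G.span_insert_of_mem hq ▸ hp) hpA
  rcases G.span_insert_subset_join hq hp with hpq | ⟨a, ha, hpa⟩
  · exact hpq ▸ G.subset_span (Set.mem_insert _ _)
  have hpa' : p ≠ a := fun h => hpA (h ▸ ha)
  exact G.line_subset_span (G.span_mono (Set.subset_insert _ _) ha)
    (G.subset_span (Set.mem_insert _ _))
    (G.mem_line_of_mem_line (G.line_symm q a ▸ hpa) hpa')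

lemma nu_mem_span_image_iff {N : Type*} {ν : N → P} (hν : Function.Injective ν)
    (hind : G.Indep (Set.range ν)) {Y : Set N} {v : N} :
    ν v ∈ G.span (ν '' Y) ↔ v ∈ Y := by
  refine ⟨fun h => ?_, fun hv => G.subset_span ⟨v, hv, rfl⟩⟩
  by_contra hv
  refine hind (ν v) ⟨v, rfl⟩ (G.span_mono ?_ h)
  rintro _ ⟨y, hy, rfl⟩
  exact ⟨⟨y, rfl⟩, fun h' => hv (hν h' ▸ hy)⟩

end ProjGeom

/-! ### Components and the frame rank -/

namespace MGraph

variable {N E : Type*} (G : MGraph N E)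

lemma adjIn_symm {S : Set E} {u v : N} (h : G.adjIn S u v) : G.adjIn S v u :=
  let ⟨e, he, hu, hv⟩ := h
  ⟨e, he, hv, hu⟩

lemma nodeConn_symm {S : Set E} {u v : N} (h : G.nodeConn S u v) : G.nodeConn S v u :=
  Relation.ReflTransGen.mono (fun _ _ => G.adjIn_symm) _ _ (Relation.ReflTransGen.swap _ _ h)

lemma nodeConn_mono {S T : Set E} (hST : S ⊆ T) {u v : N} (h : G.nodeConn S u v) :
    G.nodeConn T u v :=
  Relation.ReflTransGen.mono (fun _ _ ⟨e, he, hu, hv⟩ => ⟨e, hST he, hu, hv⟩) _ _ h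

lemma nodeConn_of_mem_ends {S : Set E} {e : E} (he : e ∈ S) {u v : N} (hu : u ∈ G.ends e)
    (hv : v ∈ G.ends e) : G.nodeConn S u v :=
  Relation.ReflTransGen.single ⟨e, he, hu, hv⟩

lemma nodeConn_ends_of_eq_pair {S : Set E} {e : E} {a b : N} (he : G.ends e = {a, b})
    (h : G.nodeConn S a b) : ∀ u ∈ G.ends e, ∀ v ∈ G.ends e, G.nodeConn S u v := by
  simp only [he, Finset.mem_insert, Finset.mem_singleton]
  rintro u (rfl | rfl) v (rfl | rfl)
  exacts [.refl, h, G.nodeConn_symm h, .refl]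

lemma nodeConn_of_connEdges {S : Set E} (hS : G.ConnEdges S) {e f : E} (he : e ∈ S)
    (hf : f ∈ S) {u v : N} (hu : u ∈ G.ends e) (hv : v ∈ G.ends f) : G.nodeConn S u v := by
  have hef := hS e he f hf
  clear hf
  induction hef generalizing v with
  | refl => exact G.nodeConn_of_mem_ends he hu hv
  | tail _ hcd ih =>
    obtain ⟨hc, hd, w, hwc, hwd⟩ := hcd
    exact (ih hwc).trans (G.nodeConn_of_mem_ends hd hwd hv)

lemma isBalancedSet_mono {B : Set (Finset E)} {S T : Set E} (h : G.IsBalancedSet B T)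
    (hST : S ⊆ T) : G.IsBalancedSet B S :=
  ⟨fun e he => h.1 e (hST he), fun C hC hcirc => h.2 C (hC.trans hST) hcirc⟩

lemma nodeConn_insert_eq {S : Set E} {e : E}
    (h : ∀ u ∈ G.ends e, ∀ v ∈ G.ends e, G.nodeConn S u v) :
    G.nodeConn (insert e S) = G.nodeConn S := by
  ext a b
  refine ⟨fun hab => ?_, G.nodeConn_mono (Set.subset_insert e S)⟩
  induction hab with
  | refl => exact .refl
  | tail _ hcd ih =>
    obtain ⟨f, hf, hc, hd⟩ := hcd
    rcases hf with rfl | hf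
    · exact ih.trans (h _ hc _ hd)
    · exact ih.tail ⟨f, hf, hc, hd⟩

def componentOf (S : Set E) (v : N) : Set N := {u | G.nodeConn S u v}

lemma components_eq_range (S : Set E) : G.components S = Set.range (G.componentOf S) := by
  ext W
  simp only [components, componentOf, Set.mem_range, eq_comm]
  rfl

lemma componentOf_eq_iff {S : Set E} {u v : N} :
    G.componentOf S u = G.componentOf S v ↔ G.nodeConn S u v := by
  refine ⟨fun h => ?_, fun h => ?_⟩
  · have hu : u ∈ G.componentOf S u := .refl
    rwa [h] at hu
  · ext w
    exact ⟨fun hw => hw.trans h, fun hw => hw.trans (G.nodeConn_symm h)⟩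

lemma components_finite [Finite N] (S : Set E) : (G.components S).Finite :=
  G.components_eq_range S ▸ Set.finite_range _

lemma numComponents_le_card [Fintype N] (S : Set E) : G.numComponents S ≤ Fintype.card N := by
  rw [numComponents, Nat.card_coe_set_eq, components_eq_range, ← Set.image_univ]
  exact (Set.ncard_image_le (Set.toFinite _)).trans (by simp)

lemma numBalComponents_le_numComponents [Finite N] (B : Set (Finset E)) (S : Set E) :
    G.numBalComponents B S ≤ G.numComponents S := by
  simp only [numBalComponents, numComponents, Nat.card_coe_set_eq]
  exact Set.ncard_le_ncard (fun W hW => hW.1) (G.components_finite S)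

lemma numBalComponents_eq_of_isBalancedSet {B : Set (Finset E)} {S : Set E}
    (h : G.IsBalancedSet B S) : G.numBalComponents B S = G.numComponents S := by
  have hall : {W | W ∈ G.components S ∧ G.IsBalancedSet B (G.edgesIn S W)} = G.components S :=
    Set.sep_eq_self_iff_mem_true.mpr fun W _ => G.isBalancedSet_mono h fun _ he => he.1
  rw [numBalComponents, hall, numComponents]

lemma isBalancedSet_of_numBalComponents_eq [Finite N] (hends : ∀ e, (G.ends e).Nonempty)
    {B : Set (Finset E)} {S : Set E} (h : G.numBalComponents B S = G.numComponents S) :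
    G.IsBalancedSet B S := by
  have hall : ∀ v, G.IsBalancedSet B (G.edgesIn S (G.componentOf S v)) := by
    simp only [numBalComponents, numComponents, Nat.card_coe_set_eq] at h
    have heq := Set.eq_of_subset_of_ncard_le (fun W hW => hW.1) h.ge (G.components_finite S)
    intro v
    have hv : G.componentOf S v ∈ G.components S := G.components_eq_range S ▸ ⟨v, rfl⟩
    exact (heq ▸ hv).2
  refine ⟨fun e he => ?_, fun C hCS hC => ?_⟩
  · obtain ⟨u, hu⟩ := hends e
    exact (hall u).1 e ⟨he, fun w hw => G.nodeConn_of_mem_ends he hw hu⟩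
  · obtain ⟨e, he⟩ := hC.1
    obtain ⟨u, hu⟩ := hends e
    refine (hall u).2 C (fun f hf => ⟨hCS hf, fun w hw => ?_⟩) hC
    exact G.nodeConn_mono hCS (G.nodeConn_of_connEdges hC.2.2.1 hf he hw hu)

lemma saturate_componentOf {S T : Set E} (hST : S ⊆ T) (v : N) :
    {u | ∃ w ∈ G.componentOf S v, G.nodeConn T u w} = G.componentOf T v := by
  ext u
  exact ⟨fun ⟨w, hw, huw⟩ => huw.trans (G.nodeConn_mono hST hw), fun hu => ⟨v, .refl, hu⟩⟩

lemma components_eq_image {S T : Set E} (hST : S ⊆ T) :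
    G.components T = (fun W => {u | ∃ w ∈ W, G.nodeConn T u w}) '' G.components S := by
  rw [components_eq_range, components_eq_range, ← Set.range_comp]
  exact congrArg Set.range (funext fun v => (G.saturate_componentOf hST v).symm)

lemma numComponents_le_of_subset [Finite N] {S T : Set E} (hST : S ⊆ T) :
    G.numComponents T ≤ G.numComponents S := by
  simp only [numComponents, Nat.card_coe_set_eq]
  rw [G.components_eq_image hST]
  exact Set.ncard_image_le (G.components_finite S)

lemma numComponents_insert_lt [Finite N] {S : Set E} {e : E} {a b : N} (ha : a ∈ G.ends e)
    (hb : b ∈ G.ends e) (hab : ¬ G.nodeConn S a b) :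
    G.numComponents (insert e S) < G.numComponents S := by
  simp only [numComponents, Nat.card_coe_set_eq]
  rw [G.components_eq_image (Set.subset_insert e S)]
  refine (Set.ncard_image_le (G.components_finite S)).lt_of_ne fun heq => hab ?_
  have hS := G.components_eq_range S
  refine G.componentOf_eq_iff.mp
    (Set.injOn_of_ncard_image_eq heq (G.components_finite S) (hS ▸ ⟨a, rfl⟩) (hS ▸ ⟨b, rfl⟩) ?_)
  simp only [G.saturate_componentOf (Set.subset_insert e S)]
  exact G.componentOf_eq_iff.mpr (G.nodeConn_of_mem_ends (Set.mem_insert e S) ha hb)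

lemma numComponents_insert_eq {S : Set E} {e : E}
    (h : ∀ u ∈ G.ends e, ∀ v ∈ G.ends e, G.nodeConn S u v) :
    G.numComponents (insert e S) = G.numComponents S := by
  simp only [numComponents, components, G.nodeConn_insert_eq h]

lemma frameRk_insert_eq [Fintype N] {B : Set (Finset E)} {S : Set E} {e : E}
    (hS : G.IsBalancedSet B S) (hSe : G.IsBalancedSet B (insert e S))
    (h : ∀ u ∈ G.ends e, ∀ v ∈ G.ends e, G.nodeConn S u v) :
    G.frameRk B (insert e S) = G.frameRk B S := by
  rw [frameRk, frameRk, G.numBalComponents_eq_of_isBalancedSet hS,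
    G.numBalComponents_eq_of_isBalancedSet hSe, G.numComponents_insert_eq h]

lemma isBalancedSet_insert_of_frameRk_eq [Fintype N] (hends : ∀ e, (G.ends e).Nonempty)
    {B : Set (Finset E)} {S : Set E} {e : E} (hS : G.IsBalancedSet B S)
    (h : G.frameRk B (insert e S) = G.frameRk B S) :
    G.IsBalancedSet B (insert e S) ∧ ∀ u ∈ G.ends e, ∀ v ∈ G.ends e, G.nodeConn S u v := by
  rw [frameRk, frameRk, G.numBalComponents_eq_of_isBalancedSet hS] at h
  have h₁ := G.numBalComponents_le_numComponents B (insert e S)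
  have h₂ := G.numComponents_le_of_subset (Set.subset_insert e S)
  have h₃ := G.numComponents_le_card S
  refine ⟨G.isBalancedSet_of_numBalComponents_eq hends (by omega), fun u hu v hv => ?_⟩
  by_contra huv
  have := G.numComponents_insert_lt hu hv huv
  omega

/-! ### Paths and circles -/

lemma ends_eq_pair_of_isLink {f : E} (hf : G.IsLink f) {u v : N} (hu : u ∈ G.ends f)
    (hv : v ∈ G.ends f) (huv : u ≠ v) : G.ends f = {u, v} :=
  (Finset.eq_of_subset_of_card_le (Finset.insert_subset hu (Finset.singleton_subset_iff.2 hv))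
    (by rw [hf, Finset.card_pair huv])).symm

lemma mem_nodesOf {Q : Finset E} {w : N} : w ∈ G.nodesOf Q ↔ ∃ e ∈ Q, w ∈ G.ends e :=
  Finset.mem_biUnion

lemma nodesOf_insert [DecidableEq E] (f : E) (Q : Finset E) :
    G.nodesOf (insert f Q) = G.ends f ∪ G.nodesOf Q :=
  Finset.biUnion_insert

lemma degreeIn_insert [DecidableEq E] {Q : Finset E} {f : E} (hf : f ∉ Q) (w : N) :
    G.degreeIn (insert f Q) w = G.degreeIn Q w + if w ∈ G.ends f then 1 else 0 := by
  rw [degreeIn, degreeIn, Finset.filter_insert]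
  split_ifs
  · exact Finset.card_insert_of_notMem fun h => hf (Finset.mem_filter.1 h).1
  · rfl

lemma degreeIn_eq_zero {Q : Finset E} {w : N} (hw : w ∉ G.nodesOf Q) : G.degreeIn Q w = 0 :=
  Finset.card_eq_zero.2 <| Finset.filter_eq_empty_iff.2 fun e he hwe =>
    hw (G.mem_nodesOf.2 ⟨e, he, hwe⟩)

lemma connEdges_insert [DecidableEq E] {Q : Finset E} (hQ : G.ConnEdges ↑Q) {f g : E}
    (hg : g ∈ Q) {v : N} (hvf : v ∈ G.ends f) (hvg : v ∈ G.ends g) : G.ConnEdges ↑(insert f Q) := by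
  rw [Finset.coe_insert]
  have hlift : ∀ x y, Relation.ReflTransGen
      (fun a b => a ∈ (↑Q : Set E) ∧ b ∈ (↑Q : Set E) ∧ ∃ v, v ∈ G.ends a ∧ v ∈ G.ends b) x y →
      Relation.ReflTransGen (fun a b => a ∈ insert f (↑Q : Set E) ∧ b ∈ insert f (↑Q : Set E) ∧
        ∃ v, v ∈ G.ends a ∧ v ∈ G.ends b) x y :=
    Relation.ReflTransGen.mono fun a b ⟨ha, hb, hab⟩ => ⟨Or.inr ha, Or.inr hb, hab⟩
  have hfg : f ∈ insert f (↑Q : Set E) ∧ g ∈ insert f (↑Q : Set E) :=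
    ⟨Set.mem_insert f _, Or.inr hg⟩
  rintro x (rfl | hx) y (rfl | hy)
  · exact .refl
  · exact .head ⟨hfg.1, hfg.2, v, hvf, hvg⟩ (hlift _ _ (hQ g hg y hy))
  · exact .tail (hlift _ _ (hQ x hx g hg)) ⟨hfg.2, hfg.1, v, hvg, hvf⟩
  · exact hlift _ _ (hQ x hx y hy)

lemma isPath_singleton {f : E} {u v : N} (hf : G.ends f = {u, v}) (huv : u ≠ v) :
    G.IsPath {f} u v := by
  have hnodes : G.nodesOf {f} = {u, v} := by simp [nodesOf, hf]
  have hdeg : ∀ w, G.degreeIn {f} w = if w ∈ G.ends f then 1 else 0 := by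
    intro w
    rw [← insert_empty_eq, G.degreeIn_insert (Finset.notMem_empty f),
      G.degreeIn_eq_zero (by simp [nodesOf]), zero_add]
  refine ⟨Finset.singleton_nonempty f, huv, ?_, ?_, ?_, ?_, ?_, ?_, ?_⟩
  · simp [IsLink, hf, Finset.card_pair huv]
  · intro x hx y hy
    rw [Finset.coe_singleton, Set.mem_singleton_iff] at hx hy
    rw [hx, hy]
  · simp [hnodes]
  · simp [hnodes]
  · simp [hdeg, hf]
  · simp [hdeg, hf]
  · intro w hw hwu hwv
    simp [hnodes, hwu, hwv] at hw

section

variable {G}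

lemma IsPath.cons [DecidableEq E] {Q : Finset E} {u v b : N} (hQ : G.IsPath Q v b) {f : E}
    (hf : G.ends f = {u, v}) (hu : u ∉ G.nodesOf Q) : G.IsPath (insert f Q) u b := by
  obtain ⟨-, hvb, hlink, hconn, hvQ, hbQ, hdv, hdb, hdeg⟩ := hQ
  have hfQ : f ∉ Q := fun h => hu (G.mem_nodesOf.2 ⟨f, h, by simp [hf]⟩)
  have hub : u ≠ b := fun h => hu (h ▸ hbQ)
  have huv : u ≠ v := fun h => hu (h ▸ hvQ)
  obtain ⟨g, hg, hvg⟩ := G.mem_nodesOf.1 hvQ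
  have hnodes := G.nodesOf_insert f Q
  refine ⟨Finset.insert_nonempty f Q, hub, ?_, G.connEdges_insert hconn hg (by simp [hf]) hvg,
    by simp [hnodes, hf], by simp [hnodes, hbQ], ?_, ?_, ?_⟩
  · intro e he
    rcases Finset.mem_insert.1 he with rfl | he
    · rw [IsLink, hf, Finset.card_pair huv]
    · exact hlink e he
  · rw [G.degreeIn_insert hfQ, G.degreeIn_eq_zero hu]
    simp [hf]
  · rw [G.degreeIn_insert hfQ, hdb]
    simp [hf, hub.symm, hvb.symm]
  · intro w hw hwu hwb
    rw [G.degreeIn_insert hfQ]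
    by_cases hwv : w = v
    · subst hwv
      simp [hdv, hf]
    · have hwQ : w ∈ G.nodesOf Q := by simpa [hnodes, hf, hwu, hwv] using hw
      simp [hdeg w hwQ hwv hwb, hf, hwu, hwv]

lemma IsPath.isCircle_insert [DecidableEq E] {Q : Finset E} {a b : N} (hQ : G.IsPath Q a b)
    {e : E} (he : G.ends e = {a, b}) (heQ : e ∉ Q) : G.IsCircle (insert e Q) := by
  obtain ⟨-, hab, hlink, hconn, haQ, -, hda, hdb, hdeg⟩ := hQ
  obtain ⟨g, hg, hag⟩ := G.mem_nodesOf.1 haQ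
  refine ⟨Finset.insert_nonempty e Q, ?_, G.connEdges_insert hconn hg (by simp [he]) hag, ?_⟩
  · intro f hf
    rcases Finset.mem_insert.1 hf with rfl | hf
    · rw [IsLink, he, Finset.card_pair hab]
    · exact hlink f hf
  · intro w hw
    rw [G.degreeIn_insert heQ]
    by_cases hwa : w = a
    · subst hwa
      simp [hda, he]
    by_cases hwb : w = b
    · subst hwb
      simp [hdb, he]
    have hwQ : w ∈ G.nodesOf Q := by simpa [G.nodesOf_insert, he, hwa, hwb] using hw
    simp [hdeg w hwQ hwa hwb, he, hwa, hwb]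

end

lemma exists_isPath_of_walk [DecidableEq E] {S : Set E} (hS : ∀ e ∈ S, G.IsLink e) {a b : N}
    (p : (SimpleGraph.fromRel (G.adjIn S)).Walk a b) (hp : p.IsPath) (hab : a ≠ b) :
    ∃ Q : Finset E, ↑Q ⊆ S ∧ G.IsPath Q a b ∧ G.nodeConn ↑Q a b ∧
      ∀ w ∈ G.nodesOf Q, w ∈ p.support := by
  induction p with
  | nil => exact absurd rfl hab
  | @cons u v b hadj p ih =>
    rw [SimpleGraph.Walk.cons_isPath_iff] at hp
    obtain ⟨huv, hadj⟩ := (SimpleGraph.fromRel_adj _ u v).1 hadj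
    obtain ⟨f, hfS, hu, hv⟩ : G.adjIn S u v := hadj.elim id G.adjIn_symm
    have hf := G.ends_eq_pair_of_isLink (hS f hfS) hu hv huv
    have hfQ : ∀ Q : Finset E, G.nodeConn ↑(insert f Q) u v :=
      fun Q => G.nodeConn_of_mem_ends (by simp) hu hv
    by_cases hvb : v = b
    · subst hvb
      refine ⟨{f}, by simpa using hfS, G.isPath_singleton hf huv, by simpa using hfQ ∅, ?_⟩
      simp [nodesOf, hf]
    obtain ⟨Q, hQS, hQ, hQc, hQp⟩ := ih hp.1 hvb
    have huQ : u ∉ G.nodesOf Q := fun h => hp.2 (hQp u h)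
    refine ⟨insert f Q, ?_, hQ.cons hf huQ,
      (hfQ Q).trans (G.nodeConn_mono (by simp) hQc), ?_⟩
    · rw [Finset.coe_insert]
      exact Set.insert_subset hfS hQS
    · intro w hw
      rw [G.nodesOf_insert, hf] at hw
      simp only [Finset.mem_union, Finset.mem_insert, Finset.mem_singleton] at hw
      rw [SimpleGraph.Walk.support_cons, List.mem_cons]
      rcases hw with (rfl | rfl) | hw
      · exact Or.inl rfl
      · exact Or.inr p.start_mem_support
      · exact Or.inr (hQp w hw)

lemma exists_isPath {S : Set E} (hS : ∀ e ∈ S, G.IsLink e) {a b : N} (hab : a ≠ b)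
    (h : G.nodeConn S a b) : ∃ Q : Finset E, ↑Q ⊆ S ∧ G.IsPath Q a b ∧ G.nodeConn ↑Q a b := by
  have hreach : ∀ {d}, G.nodeConn S a d → (SimpleGraph.fromRel (G.adjIn S)).Reachable a d := by
    intro d had
    induction had with
    | refl => rfl
    | @tail c d _ hcd ih =>
      by_cases hc : c = d
      · exact hc ▸ ih
      · exact ih.trans ((SimpleGraph.fromRel_adj _ c d).2 ⟨hc, Or.inl hcd⟩).reachable
  obtain ⟨p, hp⟩ := (hreach h).exists_isPath
  obtain ⟨Q, hQS, hQ, hQc, -⟩ := G.exists_isPath_of_walk hS p hp hab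
  exact ⟨Q, hQS, hQ, hQc⟩

end MGraph

/-! ### The Menelaean construction -/

namespace ProjGeom

variable {P N : Type*} (G : ProjGeom P) (ν : N → P) (Ehat : Set P)
  (hE : ∀ x ∈ Ehat, x ∉ Set.range ν →
    ∃ pr : N × N, pr.1 ≠ pr.2 ∧ x ∈ G.line (ν pr.1) (ν pr.2))

local notation "MG" => G.menGraph ν Ehat hE
local notation "MB" => G.menBal ν Ehat hE

lemma menGraph_ends_nonempty (e : ↥Ehat) : ((MG).ends e).Nonempty := by
  simp only [menGraph]
  split_ifs <;> simp

lemma menGraph_isLink_iff {e : ↥Ehat} : (MG).IsLink e ↔ (e : P) ∉ Set.range ν := by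
  simp only [MGraph.IsLink, menGraph]
  split_ifs with h
  · simp [h]
  · simp [h, Finset.card_pair (hE e e.2 h).choose_spec.1]

lemma menGraph_mem_line {e : ↥Ehat} (he : (MG).IsLink e) {a b : N} (ha : a ∈ (MG).ends e)
    (hb : b ∈ (MG).ends e) (hab : a ≠ b) : (e : P) ∈ G.line (ν a) (ν b) := by
  have hr := (menGraph_isLink_iff G ν Ehat hE).1 he
  have hline := (hE e e.2 hr).choose_spec.2
  simp only [menGraph, dif_neg hr, Finset.mem_insert, Finset.mem_singleton] at ha hb
  rcases ha with rfl | rfl <;> rcases hb with rfl | rfl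
  exacts [absurd rfl hab, hline, G.line_symm _ _ ▸ hline, absurd rfl hab]

lemma nu_mem_span_of_nodeConn {S : Set ↥Ehat} (hS : ∀ e ∈ S, (MG).IsLink e) {Y : Set N}
    {y v : N} (hy : y ∈ Y) (h : (MG).nodeConn S y v) :
    ν v ∈ G.span (Subtype.val '' S ∪ ν '' Y) := by
  induction h with
  | refl => exact G.subset_span (Or.inr ⟨y, hy, rfl⟩)
  | @tail c d _ hcd ih =>
    obtain ⟨f, hf, hc, hd⟩ := hcd
    by_cases hcd : c = d
    · exact hcd ▸ ih
    have hfc : (f : P) ≠ ν c :=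
      fun h => (menGraph_isLink_iff G ν Ehat hE).1 (hS f hf) ⟨c, h.symm⟩
    exact G.line_subset_span ih (G.subset_span (Or.inl ⟨f, hf, rfl⟩))
      (G.mem_line_of_mem_line (G.menGraph_mem_line ν Ehat hE (hS f hf) hc hd hcd) hfc)

lemma mem_span_of_nodeConn_of_crossFlat {Q : Set ↥Ehat} (hQ : ∀ f ∈ Q, (MG).IsLink f)
    {a b : N} (hab : (MG).nodeConn Q a b) {x : P} (hx : x ∈ G.line (ν a) (ν b)) {t : Set P}
    (ht : G.crossFlat ν t) (hQt : Subtype.val '' Q ⊆ t) (hxt : x ∈ t) :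
    x ∈ G.span (Subtype.val '' Q) := by
  have hb : ν b ∈ G.span (insert (ν a) (Subtype.val '' Q)) := by
    simpa [Set.union_singleton] using G.nu_mem_span_of_nodeConn ν Ehat hE hQ (Y := {a}) rfl hab
  have hxa : x ∈ G.span (insert (ν a) (Subtype.val '' Q)) :=
    G.line_subset_span (G.subset_span (Set.mem_insert _ _)) hb hx
  by_contra hxQ
  exact ht.2 a (G.span_le ht.1 (Set.insert_subset hxt hQt) (G.exchange hxa hxQ))

lemma mem_span_of_isBalancedSet_insert {T : Set ↥Ehat} {e : ↥Ehat}
    (hbal : (MG).IsBalancedSet MB (insert e T)) (heT : e ∉ T)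
    (hconn : ∀ u ∈ (MG).ends e, ∀ v ∈ (MG).ends e, (MG).nodeConn T u v) :
    (e : P) ∈ G.span (Subtype.val '' T) := by
  have he := hbal.1 e (Set.mem_insert e T)
  obtain ⟨a, b, hab, hends⟩ := Finset.card_eq_two.1 he
  have ha : a ∈ (MG).ends e := by simp [hends]
  have hb : b ∈ (MG).ends e := by simp [hends]
  have hT : ∀ f ∈ T, (MG).IsLink f := fun f hf => hbal.1 f (Or.inr hf)
  obtain ⟨Q, hQT, hQ, hQc⟩ := (MG).exists_isPath hT hab (hconn a ha b hb)
  have hCT : ↑(insert e Q) ⊆ insert e T := by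
    rw [Finset.coe_insert]
    exact Set.insert_subset_insert hQT
  obtain ⟨-, t, ht, hCt⟩ := hbal.2 _ hCT (hQ.isCircle_insert hends fun h => heT (hQT h))
  refine G.span_mono (Set.image_mono hQT) (G.mem_span_of_nodeConn_of_crossFlat ν Ehat hE
    (fun f hf => hT f (hQT hf)) hQc (G.menGraph_mem_line ν Ehat hE he ha hb hab) ht ?_
    (hCt e (Finset.mem_insert_self e Q)))
  rintro _ ⟨f, hf, rfl⟩
  exact hCt f (Finset.mem_insert_of_mem hf)

lemma exists_nodeConn_insert_of_nu_mem_span {S : Set ↥Ehat} {e : ↥Ehat}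
    (hS : (MG).IsBalancedSet MB (insert e S)) (heS : e ∉ S)
    (ih : ∀ {Y : Set N} {v : N}, ν v ∈ G.span (Subtype.val '' S ∪ ν '' Y) →
      ∃ y ∈ Y, (MG).nodeConn S v y)
    {Y : Set N} {v : N} (h : ν v ∈ G.span (Subtype.val '' insert e S ∪ ν '' Y)) :
    ∃ y ∈ Y, (MG).nodeConn (insert e S) v y := by
  rw [Set.image_insert_eq, Set.insert_union] at h
  have hlinks : ∀ f ∈ S, (MG).IsLink f := fun f hf => hS.1 f (Or.inr hf)
  have hmono : ∀ {u w : N}, (MG).nodeConn S u w → (MG).nodeConn (insert e S) u w :=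
    (MG).nodeConn_mono (Set.subset_insert e S)
  by_cases hv : ν v ∈ G.span (Subtype.val '' S ∪ ν '' Y)
  · obtain ⟨y, hy, hvy⟩ := ih hv
    exact ⟨y, hy, hmono hvy⟩
  have hx : (e : P) ∉ G.span (Subtype.val '' S ∪ ν '' Y) :=
    fun hx => hv (G.span_insert_of_mem hx ▸ h)
  have hxv := G.exchange h hv
  have he := hS.1 e (Set.mem_insert e S)
  obtain ⟨a, b, hab, hends⟩ := Finset.card_eq_two.1 he
  have ha : a ∈ (MG).ends e := by simp [hends]
  have hb : b ∈ (MG).ends e := by simp [hends]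
  have hline := G.menGraph_mem_line ν Ehat hE he ha hb hab
  have hab_S : ¬ (MG).nodeConn S a b := fun hconn => hx <|
    G.span_mono Set.subset_union_left <| G.mem_span_of_isBalancedSet_insert ν Ehat hE hS heS
      ((MG).nodeConn_ends_of_eq_pair hends hconn)
  have hreach : ∀ {c d : N}, (e : P) ∈ G.line (ν c) (ν d) → ¬ (MG).nodeConn S d c →
      (MG).nodeConn S d v ∨ ∃ y ∈ Y, (MG).nodeConn S d y := by
    intro c d hcd hdc
    have hec : (e : P) ≠ ν c := fun h => (menGraph_isLink_iff G ν Ehat hE).1 he ⟨c, h.symm⟩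
    have hd : ν d ∈ G.span (Subtype.val '' S ∪ ν '' insert c (insert v Y)) := by
      rw [Set.image_insert_eq, Set.image_insert_eq, Set.union_insert, Set.union_insert]
      exact G.line_subset_span (G.subset_span (Set.mem_insert _ _))
        (G.span_mono (Set.subset_insert _ _) hxv) (G.mem_line_of_mem_line hcd hec)
    obtain ⟨y, hy, hdy⟩ := ih hd
    rcases hy with rfl | rfl | hy
    exacts [absurd hdy hdc, Or.inl hdy, Or.inr ⟨y, hy, hdy⟩]
  have hab_e : (MG).nodeConn (insert e S) a b :=
    (MG).nodeConn_of_mem_ends (Set.mem_insert e S) ha hb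
  rcases hreach hline (fun h => hab_S ((MG).nodeConn_symm h)) with hbv | ⟨y, hy, hby⟩ <;>
    rcases hreach (G.line_symm _ _ ▸ hline) hab_S with hav | ⟨y', hy', hay'⟩
  · exact absurd (hav.trans ((MG).nodeConn_symm hbv)) hab_S
  · exact ⟨y', hy', ((hmono ((MG).nodeConn_symm hbv)).trans ((MG).nodeConn_symm hab_e)).trans
      (hmono hay')⟩
  · exact ⟨y, hy, ((hmono ((MG).nodeConn_symm hav)).trans hab_e).trans (hmono hby)⟩
  · refine absurd (G.line_subset_span ?_ ?_ hline) hx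
    · exact G.nu_mem_span_of_nodeConn ν Ehat hE hlinks hy' ((MG).nodeConn_symm hay')
    · exact G.nu_mem_span_of_nodeConn ν Ehat hE hlinks hy ((MG).nodeConn_symm hby)

lemma exists_nodeConn_of_nu_mem_span (hν : Function.Injective ν)
    (hind : G.Indep (Set.range ν)) (S : Finset ↥Ehat) (hS : (MG).IsBalancedSet MB ↑S)
    {Y : Set N} {v : N} (h : ν v ∈ G.span (Subtype.val '' (↑S : Set ↥Ehat) ∪ ν '' Y)) :
    ∃ y ∈ Y, (MG).nodeConn ↑S v y := by
  induction S using Finset.induction_on generalizing Y v with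
  | empty =>
    simp only [Finset.coe_empty, Set.image_empty, Set.empty_union] at h
    exact ⟨v, (G.nu_mem_span_image_iff hν hind).1 h, .refl⟩
  | @insert e S heS ih =>
    rw [Finset.coe_insert] at hS h ⊢
    exact G.exists_nodeConn_insert_of_nu_mem_span ν Ehat hE hS heS
      (ih ((MG).isBalancedSet_mono hS (Set.subset_insert e _))) h

lemma crossFlat_span_of_isBalancedSet (hν : Function.Injective ν)
    (hind : G.Indep (Set.range ν)) {S : Set ↥Ehat} (hS : (MG).IsBalancedSet MB S) :
    G.crossFlat ν (G.span (Subtype.val '' S)) := by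
  refine ⟨G.isFlat_span _, fun w hw => ?_⟩
  obtain ⟨S₀, hS₀S, hw₀⟩ := G.mem_span_image_finite Subtype.val hw
  obtain ⟨y, hy, -⟩ := G.exists_nodeConn_of_nu_mem_span ν Ehat hE hν hind S₀
    ((MG).isBalancedSet_mono hS hS₀S) (Y := ∅) (by simpa using hw₀)
  exact hy

lemma isBalancedSet_of_subset_crossFlat {S : Set ↥Ehat} {t : Set P} (ht : G.crossFlat ν t)
    (hSt : Subtype.val '' S ⊆ t) : (MG).IsBalancedSet MB S := by
  refine ⟨fun e he => (menGraph_isLink_iff G ν Ehat hE).2 ?_, fun C hCS hC => ?_⟩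
  · rintro ⟨w, hw⟩
    exact ht.2 w (hw ▸ hSt ⟨e, he, rfl⟩)
  · exact ⟨hC, t, ht, fun e he => hSt ⟨e, hCS he, rfl⟩⟩

lemma mem_of_mem_span_of_frameClosed [Fintype N] (hν : Function.Injective ν)
    (hind : G.Indep (Set.range ν)) {S : Set ↥Ehat} (hS : (MG).IsBalancedSet MB S)
    (hcl : (MG).FrameClosed MB S) {e : ↥Ehat} (he : (e : P) ∈ G.span (Subtype.val '' S)) :
    e ∈ S := by
  obtain ⟨S₀, hS₀S, he₀⟩ := G.mem_span_image_finite Subtype.val he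
  have hS₀ := (MG).isBalancedSet_mono hS hS₀S
  have hcross := G.crossFlat_span_of_isBalancedSet ν Ehat hE hν hind hS₀
  have hSe : (MG).IsBalancedSet MB (insert e ↑S₀) := by
    refine G.isBalancedSet_of_subset_crossFlat ν Ehat hE hcross ?_
    rw [Set.image_insert_eq]
    exact Set.insert_subset he₀ G.subset_span
  have hlink := hSe.1 e (Set.mem_insert e _)
  obtain ⟨a, b, hab, hends⟩ := Finset.card_eq_two.1 hlink
  have hline := G.menGraph_mem_line ν Ehat hE hlink (by simp [hends]) (by simp [hends]) hab
  have hea : (e : P) ≠ ν a := fun h => (menGraph_isLink_iff G ν Ehat hE).1 hlink ⟨a, h.symm⟩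
  have hb : ν b ∈ G.span (Subtype.val '' (↑S₀ : Set ↥Ehat) ∪ ν '' {a}) :=
    G.line_subset_span (G.subset_span (Or.inr ⟨a, rfl, rfl⟩))
      (G.span_mono Set.subset_union_left he₀) (G.mem_line_of_mem_line hline hea)
  obtain ⟨_, rfl, hba⟩ := G.exists_nodeConn_of_nu_mem_span ν Ehat hE hν hind S₀ hS₀ hb
  refine hcl e ⟨S₀, hS₀S, ?_⟩
  simp only [Finset.coe_insert]
  exact (MG).frameRk_insert_eq hS₀ hSe
    ((MG).nodeConn_ends_of_eq_pair hends ((MG).nodeConn_symm hba))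

lemma frameClosed_of_eq_inter [Fintype N] {S : Set ↥Ehat} {t : Set P} (ht : G.crossFlat ν t)
    (hSt : Subtype.val '' S = Ehat ∩ t) : (MG).FrameClosed MB S := by
  rintro e ⟨S₀, hS₀S, hrk⟩
  have hS₀t : Subtype.val '' (↑S₀ : Set ↥Ehat) ⊆ t :=
    (Set.image_mono hS₀S).trans (hSt ▸ Set.inter_subset_right)
  have hS₀ := G.isBalancedSet_of_subset_crossFlat ν Ehat hE ht hS₀t
  simp only [Finset.coe_insert] at hrk
  obtain ⟨hbal, hconn⟩ :=
    (MG).isBalancedSet_insert_of_frameRk_eq (G.menGraph_ends_nonempty ν Ehat hE) hS₀ hrk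
  by_cases he : e ∈ (↑S₀ : Set ↥Ehat)
  · exact hS₀S he
  have het : (e : P) ∈ t :=
    G.span_le ht.1 hS₀t (G.mem_span_of_isBalancedSet_insert ν Ehat hE hbal he hconn)
  obtain ⟨f, hf, hfe⟩ : (e : P) ∈ Subtype.val '' S := by
    rw [hSt]
    exact ⟨e.2, het⟩
  exact Subtype.ext hfe ▸ hf

end ProjGeom

/-- Let `N̂ = ν(N)` be an independent set of points in a
projective geometry and let `Ehat ⊆ Ê^•(N̂)`.  The closed, balanced edge sets of
the frame matroid `G(Ω(N̂, Ehat))` are exactly the edge sets `S` whose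
corresponding point sets `Ŝ` are the intersections of `Ehat` with cross-flats. -/
theorem stmt4 {P N : Type*} [Fintype N] (G : ProjGeom P) (ν : N → P)
    (hν : Function.Injective ν) (hind : G.Indep (Set.range ν))
    (Ehat : Set P)
    (hE : ∀ x ∈ Ehat, x ∉ Set.range ν →
      ∃ pr : N × N, pr.1 ≠ pr.2 ∧ x ∈ G.line (ν pr.1) (ν pr.2)) :
    ∀ S : Set ↥Ehat,
      ((G.menGraph ν Ehat hE).IsBalancedSet (G.menBal ν Ehat hE) S ∧
        (G.menGraph ν Ehat hE).FrameClosed (G.menBal ν Ehat hE) S) ↔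
      ∃ t : Set P, G.crossFlat ν t ∧ Subtype.val '' S = Ehat ∩ t := by
  intro S
  constructor
  · rintro ⟨hbal, hcl⟩
    refine ⟨G.span (Subtype.val '' S),
      G.crossFlat_span_of_isBalancedSet ν Ehat hE hν hind hbal, ?_⟩
    refine (Set.subset_inter (by simp) G.subset_span).antisymm ?_
    rintro x ⟨hx, hxS⟩
    exact ⟨⟨x, hx⟩, G.mem_of_mem_span_of_frameClosed ν Ehat hE hν hind hbal hcl hxS, rfl⟩
  · rintro ⟨t, ht, hSt⟩
    exact ⟨G.isBalancedSet_of_subset_crossFlat ν Ehat hE ht (hSt ▸ Set.inter_subset_right),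
      G.frameClosed_of_eq_inter ν Ehat hE ht hSt⟩
end
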